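/- arXiv:1909.12175 — 7 statements merged into one kernel-verified Lean document; each statement's English description precedes it below -/
import Mathlib

section
/- If a matroid M on ground set E is representable over a finite field F, then M is |F|-entropic: there exists a probability distribution μ on F^E such that for every subset S of E, the rank of S in M equals the Shannon entropy (in base |F|) of the marginal of μ on S. -/
/-!
Let `V₀` be the span of the vectors `f e` and draw a linear functional `φ` on `V₀` uniformly at
random; the witness is the joint law of the coordinates `φ (f e)`. Its marginal on `S` is the image
of the uniform distribution under the linear map `φ ↦ (φ (f e))_{e ∈ S}`. A homomorphism of finite
groups pushes the uniform distribution forward to the uniform distribution on its image, so the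
marginal has entropy `log_|F|` of `|F| ^ rank`, and by duality that rank is `dim span f(S)`.
-/

open scoped Classical BigOperators

/-- Shannon entropy in base `q` of a probability mass function on a finite type. -/
noncomputable def shannonEntropy {α : Type*} [Fintype α] (q : ℝ) (μ : PMF α) : ℝ :=
  -∑ x : α, (μ x).toReal * Real.logb q (μ x).toReal

/-- Marginal of a distribution on `ι → α` on the coordinates in `S`. -/
noncomputable def marg {ι α : Type*} (μ : PMF (ι → α)) (S : Finset ι) :
    PMF ({ i // i ∈ S } → α) :=
  μ.map fun x i => x i.1

open scoped ENNReal
open Finset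

theorem shannonEntropy_uniformOfFinset {α : Type*} [Fintype α] (q : ℝ) (s : Finset α)
    (hs : s.Nonempty) : shannonEntropy q (PMF.uniformOfFinset s hs) = Real.logb q #s := by
  have hterm : ∀ x, ((PMF.uniformOfFinset s hs x).toReal *
      Real.logb q (PMF.uniformOfFinset s hs x).toReal) =
      if x ∈ s then (#s : ℝ)⁻¹ * Real.logb q (#s : ℝ)⁻¹ else 0 := by
    intro x
    split_ifs with hx <;> simp [hx]
  have hs' : (#s : ℝ) ≠ 0 := by exact_mod_cast hs.card_pos.ne'
  rw [shannonEntropy, sum_congr rfl fun x _ => hterm x, sum_ite_mem, univ_inter, sum_const,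
    nsmul_eq_mul, Real.logb_inv]
  field_simp

theorem PMF.map_uniformOfFintype_addMonoidHom {G H Φ : Type*} [AddGroup G] [Fintype G]
    [AddMonoid H] [FunLike Φ G H] [AddMonoidHomClass Φ G H] (φ : Φ) :
    (PMF.uniformOfFintype G).map φ =
      PMF.uniformOfFinset (univ.image φ) (univ_nonempty.image _) := by
  ext y
  rw [PMF.map_apply, tsum_fintype, PMF.uniformOfFinset_apply]
  simp only [PMF.uniformOfFintype_apply, ← sum_filter, sum_const, nsmul_eq_mul, eq_comm (a := y)]
  split_ifs with hy
  · have hcard : Fintype.card G = #(univ.image φ) * #{x | φ x = y} := by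
      rw [← card_univ, card_eq_sum_card_image φ univ]
      exact sum_const_nat fun z hz =>
        AddMonoidHom.card_fiber_eq_of_mem_range φ (by simpa using hz) (by simpa using hy)
    have hfiber : (#{x | φ x = y} : ℝ≥0∞) ≠ 0 := by
      have := hcard ▸ Fintype.card_ne_zero (α := G)
      exact_mod_cast right_ne_zero_of_mul this
    rw [hcard, Nat.cast_mul, ENNReal.mul_inv (by simp) (by simp), mul_left_comm,
      ENNReal.mul_inv_cancel hfiber (by simp), mul_one]
  · have : ({x | φ x = y} : Finset G) = ∅ :=
      filter_false_of_mem fun x _ hx => hy (hx ▸ mem_image_of_mem φ (mem_univ x))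
    simp [this]

theorem shannonEntropy_map_uniformOfFintype_linearMap {F D W : Type*} [Field F] [Fintype F]
    [AddCommGroup D] [Module F D] [Fintype D] [AddCommGroup W] [Module F W] [Fintype W]
    (L : D →ₗ[F] W) :
    shannonEntropy (Fintype.card F) ((PMF.uniformOfFintype D).map L) =
      Module.finrank F (LinearMap.range L) := by
  have hcard : #(univ.image L) = Fintype.card F ^ Module.finrank F (LinearMap.range L) := by
    rw [← Set.toFinset_range, Set.toFinset_card, ← Module.card_eq_pow_finrank]
    exact Fintype.card_congr (Equiv.setCongr (LinearMap.coe_range L).symm)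
  rw [PMF.map_uniformOfFintype_addMonoidHom, shannonEntropy_uniformOfFinset, hcard, Nat.cast_pow,
    Real.logb_pow, Real.logb_self_eq_one (by exact_mod_cast Fintype.one_lt_card), mul_one]

theorem finrank_range_pi_dualEval {K V ι : Type*} [Field K] [AddCommGroup V] [Module K V]
    [FiniteDimensional K V] [Fintype ι] (v : ι → V) :
    Module.finrank K (LinearMap.range (LinearMap.pi fun i => Module.Dual.eval K V (v i))) =
      Module.finrank K (Submodule.span K (Set.range v)) := by
  have hpi : LinearMap.pi (fun i => Module.Dual.eval K V (v i)) =
      (LinearEquiv.piRing K K ι K).toLinearMap ∘ₗ (Fintype.linearCombination K v).dualMap := by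
    ext φ i
    simp [LinearMap.dualMap_apply, Fintype.linearCombination_apply_single]
  rw [hpi, LinearMap.range_comp, LinearEquiv.finrank_map_eq,
    LinearMap.finrank_range_dualMap_eq_finrank_range, Fintype.range_linearCombination]

theorem Submodule.finrank_span_range_coe {K V ι : Type*} [Field K] [AddCommGroup V] [Module K V]
    (p : Submodule K V) (v : ι → p) :
    Module.finrank K (span K (Set.range fun i => (v i : V))) =
      Module.finrank K (span K (Set.range v)) := by
  rw [← p.finrank_map_subtype_eq, map_span, ← Set.range_comp]
  rfl

/-- If a matroid with rank function `r` on ground set `E` is representable over a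
finite field `F`, then it is `|F|`-entropic. -/
theorem representable_is_entropic {F : Type*} [Field F] [Fintype F]
    {E : Type*} [Fintype E]
    (r : Finset E → ℕ)
    (V : Type*) [AddCommGroup V] [Module F V] (f : E → V)
    (hrep : ∀ S : Finset E,
      r S = Module.finrank F (Submodule.span F (f '' (S : Set E)))) :
    ∃ μ : PMF (E → F), ∀ S : Finset E,
      (r S : ℝ) = shannonEntropy (Fintype.card F) (marg μ S) := by
  let V₀ := Submodule.span F (Set.range f)
  let g : E → V₀ := fun e => ⟨f e, Submodule.subset_span (Set.mem_range_self e)⟩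
  have : FiniteDimensional F V₀ := FiniteDimensional.span_of_finite F (Set.finite_range f)
  have : Finite (Module.Dual F V₀) := Module.finite_of_finite F
  let : Fintype (Module.Dual F V₀) := Fintype.ofFinite _
  let μ₀ := PMF.uniformOfFintype (Module.Dual F V₀)
  refine ⟨μ₀.map fun φ e => φ (g e), fun S => ?_⟩
  have hmarg : marg (μ₀.map fun φ e => φ (g e)) S =
      μ₀.map (LinearMap.pi fun i : S => Module.Dual.eval F V₀ (g i)) :=
    PMF.map_comp _ _ _
  rw [hmarg, shannonEntropy_map_uniformOfFintype_linearMap, finrank_range_pi_dualEval,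
    ← Submodule.finrank_span_range_coe, hrep, Set.image_eq_range]
  rfl
end

section
/- The uniform matroid U_{2,4} is not 2-entropic: there is no probability distribution μ on {0,1}^4 with random variables X_1,…,X_4 such that H(X_i) = 1 for all i, H(X_i, X_j) = 2 for all i ≠ j, and H(X_1, X_2, X_3, X_4) = 2, where H is Shannon entropy in base 2. -/
open scoped Classical BigOperators

/-!
If `H(X_i, X_j) = H(X_1, …, X_4)`, the pair `(X_i, X_j)` determines the whole vector on the support
of its law, and `H(X_1, …, X_4) = 2` forces that support to have at least four points. The support
would then be a binary code of length 4 in which any two coordinates determine the codeword: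
coordinates 2 and 3 would be two orthogonal Latin squares of order 2, which do not exist, since
every Latin square of order 2 takes the same value at `(0, 0)` and `(1, 1)`.
-/

open Finset Real

namespace Real

variable {ι : Type*} {s : Finset ι} {w : ι → ℝ}

lemma neg_mul_log_le_negMulLog {a b : ℝ} (ha : 0 ≤ a) (hab : a ≤ b) :
    -a * log b ≤ negMulLog a := by
  rcases ha.eq_or_lt with rfl | ha
  · simp
  · rw [negMulLog, neg_mul, neg_mul, neg_le_neg_iff]
    exact mul_le_mul_of_nonneg_left (log_le_log ha hab) ha.le

lemma negMulLog_sum_eq (s : Finset ι) (w : ι → ℝ) :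
    negMulLog (∑ i ∈ s, w i) = ∑ i ∈ s, -w i * log (∑ j ∈ s, w j) := by
  rw [negMulLog, ← sum_mul, sum_neg_distrib]

lemma negMulLog_sum_le (hw : ∀ i ∈ s, 0 ≤ w i) :
    negMulLog (∑ i ∈ s, w i) ≤ ∑ i ∈ s, negMulLog (w i) := by
  rw [negMulLog_sum_eq]
  exact sum_le_sum fun i hi => neg_mul_log_le_negMulLog (hw i hi) (single_le_sum hw hi)

lemma negMulLog_sum_lt (hw : ∀ i ∈ s, 0 ≤ w i) {i j : ι} (hi : i ∈ s) (hj : j ∈ s)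
    (hij : i ≠ j) (hwi : 0 < w i) (hwj : 0 < w j) :
    negMulLog (∑ k ∈ s, w k) < ∑ k ∈ s, negMulLog (w k) := by
  rw [negMulLog_sum_eq]
  refine sum_lt_sum (fun k hk => neg_mul_log_le_negMulLog (hw k hk) (single_le_sum hw hk))
    ⟨i, hi, ?_⟩
  have hlt : w i < ∑ k ∈ s, w k := calc
    w i < w i + w j := lt_add_of_pos_right _ hwj
    _ = ∑ k ∈ {i, j}, w k := (sum_pair hij).symm
    _ ≤ ∑ k ∈ s, w k :=
        sum_le_sum_of_subset_of_nonneg (insert_subset hi (singleton_subset_iff.2 hj))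
          fun k hk _ => hw k hk
  rw [negMulLog, neg_mul, neg_mul, neg_lt_neg_iff]
  exact mul_lt_mul_of_pos_left (log_lt_log hwi hlt) hwi

end Real

namespace PMF

variable {α β : Type*} [Fintype α]

lemma sum_toReal_apply (μ : PMF α) : ∑ x, (μ x).toReal = 1 := by
  have h := μ.tsum_coe
  rw [tsum_fintype] at h
  rw [← ENNReal.toReal_sum fun x _ => μ.apply_ne_top x, h, ENNReal.toReal_one]

lemma toReal_map_apply (μ : PMF α) (f : α → β) (y : β) :
    (μ.map f y).toReal = ∑ x with f x = y, (μ x).toReal := by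
  rw [map_apply, tsum_fintype,
    ENNReal.toReal_sum fun x _ => by split_ifs <;> simp [μ.apply_ne_top], sum_filter]
  simp_rw [eq_comm (a := y), apply_ite ENNReal.toReal, ENNReal.toReal_zero]

end PMF

section Entropy

variable {α β : Type*} [Fintype α] [Fintype β] {q : ℝ}

lemma shannonEntropy_eq_sum_negMulLog (q : ℝ) (μ : PMF α) :
    shannonEntropy q μ = (∑ x, negMulLog (μ x).toReal) / log q := by
  simp only [shannonEntropy, negMulLog, logb, sum_div, ← sum_neg_distrib]
  congr 1 with x
  ring

lemma shannonEntropy_map_le (hq : 1 < q) (μ : PMF α) (f : α → β) :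
    shannonEntropy q (μ.map f) ≤ shannonEntropy q μ := by
  simp only [shannonEntropy_eq_sum_negMulLog, PMF.toReal_map_apply]
  refine div_le_div_of_nonneg_right ?_ (log_pos hq).le
  rw [← sum_fiberwise univ f]
  exact sum_le_sum fun y _ => negMulLog_sum_le fun x _ => ENNReal.toReal_nonneg

lemma shannonEntropy_map_lt (hq : 1 < q) (μ : PMF α) {f : α → β} {x y : α} (hx : μ x ≠ 0)
    (hy : μ y ≠ 0) (hxy : x ≠ y) (hf : f x = f y) :
    shannonEntropy q (μ.map f) < shannonEntropy q μ := by
  simp only [shannonEntropy_eq_sum_negMulLog, PMF.toReal_map_apply]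
  refine div_lt_div_of_pos_right ?_ (log_pos hq)
  rw [← sum_fiberwise univ f]
  refine sum_lt_sum (fun z _ => negMulLog_sum_le fun x _ => ENNReal.toReal_nonneg)
    ⟨f x, mem_univ _, ?_⟩
  exact negMulLog_sum_lt (fun _ _ => ENNReal.toReal_nonneg) (by simp) (by simp [hf]) hxy
    (ENNReal.toReal_pos hx (μ.apply_ne_top x)) (ENNReal.toReal_pos hy (μ.apply_ne_top y))

lemma injOn_support_of_shannonEntropy_map_eq (hq : 1 < q) {μ : PMF α} {f : α → β}
    (h : shannonEntropy q (μ.map f) = shannonEntropy q μ) : Set.InjOn f μ.support :=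
  fun _ hx _ hy hf => by_contra fun hxy => (shannonEntropy_map_lt hq μ hx hy hxy hf).ne h

lemma shannonEntropy_map_of_leftInverse (hq : 1 < q) (μ : PMF α) {f : α → β} {g : β → α}
    (hgf : Function.LeftInverse g f) : shannonEntropy q (μ.map f) = shannonEntropy q μ := by
  refine (shannonEntropy_map_le hq μ f).antisymm ?_
  simpa [PMF.map_comp, hgf.comp_eq_id, PMF.map_id] using shannonEntropy_map_le hq (μ.map f) g

lemma shannonEntropy_le_logb_card_support (hq : 1 < q) (μ : PMF α) :
    shannonEntropy q μ ≤ logb q μ.support.toFinset.card := by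
  set S := μ.support.toFinset
  have hpos : ∀ x ∈ S, 0 < (μ x).toReal := fun x hx =>
    ENNReal.toReal_pos (by simpa [S] using hx) (μ.apply_ne_top x)
  have hS : ∑ x ∈ S, (μ x).toReal = 1 := by
    rw [← μ.sum_toReal_apply]
    exact sum_subset (subset_univ _) fun x _ hx => by simp_all [S]
  have hsum : ∑ x, negMulLog (μ x).toReal = ∑ x ∈ S, (μ x).toReal • log (μ x).toReal⁻¹ := by
    rw [← sum_subset (subset_univ S) fun x _ hx => by simp_all [S]]
    exact sum_congr rfl fun x _ => by rw [negMulLog, log_inv, smul_eq_mul]; ring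
  rw [shannonEntropy_eq_sum_negMulLog, logb, hsum]
  refine div_le_div_of_nonneg_right ?_ (log_pos hq).le
  calc ∑ x ∈ S, (μ x).toReal • log (μ x).toReal⁻¹
      ≤ log (∑ x ∈ S, (μ x).toReal • (μ x).toReal⁻¹) :=
        strictConcaveOn_log_Ioi.concaveOn.le_map_sum (fun _ _ => ENNReal.toReal_nonneg) hS
          fun x hx => inv_pos.2 (hpos x hx)
    _ = log S.card := by
        simp only [smul_eq_mul]
        rw [sum_congr rfl fun x hx => mul_inv_cancel₀ (hpos x hx).ne', sum_const, nsmul_one]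

end Entropy

lemma injOn_pair_of_shannonEntropy_marg_eq {ι α : Type*} [Fintype α] [DecidableEq ι]
    [Fintype ι] {q : ℝ} (hq : 1 < q) {μ : PMF (ι → α)} {i j : ι}
    (h : shannonEntropy q (marg μ {i, j}) = shannonEntropy q μ) :
    Set.InjOn (fun x => (x i, x j)) μ.support := by
  intro x hx y hy hxy
  simp only [Prod.mk.injEq] at hxy
  refine injOn_support_of_shannonEntropy_map_eq hq h hx hy (funext fun ⟨k, hk⟩ => ?_)
  obtain rfl | rfl : k = i ∨ k = j := by simpa using hk
  exacts [hxy.1, hxy.2]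

lemma Fin.two_eq_of_ne_of_ne {a b c : Fin 2} (hab : a ≠ b) (hbc : b ≠ c) : a = c := by
  omega

theorem not_injOn_pairs_of_four_le_card {C : Finset (Fin 4 → Fin 2)} (hC : 4 ≤ C.card) :
    ¬ ∀ i j : Fin 4, i ≠ j → Set.InjOn (fun x : Fin 4 → Fin 2 => (x i, x j)) ↑C := by
  intro hinj
  have hsurj : ∀ a b : Fin 2, ∃ x ∈ C, x 0 = a ∧ x 1 = b := by
    intro a b
    obtain ⟨x, hx, hab⟩ := surjOn_of_injOn_of_card_le (t := univ)
      (fun x : Fin 4 → Fin 2 => (x 0, x 1)) (fun _ _ => mem_coe.2 (mem_univ _))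
      (hinj 0 1 (by decide)) (by simpa using hC)
      (mem_coe.2 (mem_univ (a, b)))
    exact ⟨x, hx, by simpa using hab⟩
  choose w hwC hw0 hw1 using hsurj
  -- `w a b` is the codeword beginning with `a, b`; `w · · 2` and `w · · 3` are Latin squares.
  have hrow : ∀ k a, k ≠ 0 → w a 0 k ≠ w a 1 k := fun k a hk h => by
    have := hinj 0 k hk.symm (hwC a 0) (hwC a 1) (by simp [hw0, h])
    simpa [hw1] using congrFun this 1
  have hcol : ∀ k b, k ≠ 1 → w 0 b k ≠ w 1 b k := fun k b hk h => by
    have := hinj 1 k hk.symm (hwC 0 b) (hwC 1 b) (by simp [hw1, h])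
    simpa [hw0] using congrFun this 0
  have hdiag : ∀ k, k ≠ 0 → k ≠ 1 → w 0 0 k = w 1 1 k := fun k h0 h1 =>
    Fin.two_eq_of_ne_of_ne (hrow k 0 h0) (hcol k 1 h1)
  have := hinj 2 3 (by decide) (hwC 0 0) (hwC 1 1)
    (Prod.ext (hdiag 2 (by decide) (by decide)) (hdiag 3 (by decide) (by decide)))
  simpa [hw0] using congrFun this 0

/-- The uniform matroid `U_{2,4}` is not 2-entropic. -/
theorem U24_not_two_entropic :
    ¬ ∃ μ : PMF (Fin 4 → Fin 2),
      (∀ i : Fin 4, shannonEntropy 2 (marg μ {i}) = 1) ∧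
      (∀ i j : Fin 4, i ≠ j → shannonEntropy 2 (marg μ ({i, j} : Finset (Fin 4))) = 2) ∧
      shannonEntropy 2 (marg μ (Finset.univ : Finset (Fin 4))) = 2 := by
  rintro ⟨μ, -, hpair, hfull⟩
  have hμ : shannonEntropy 2 μ = 2 :=
    (shannonEntropy_map_of_leftInverse one_lt_two μ
      (g := fun y i => y ⟨i, mem_univ i⟩) fun _ => rfl).symm.trans hfull
  have hinj : ∀ i j : Fin 4, i ≠ j →
      Set.InjOn (fun x : Fin 4 → Fin 2 => (x i, x j)) ↑μ.support.toFinset := fun i j hij => by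
      simpa using injOn_pair_of_shannonEntropy_marg_eq one_lt_two ((hpair i j hij).trans hμ.symm)
  have hcard : 4 ≤ μ.support.toFinset.card := by
    have hpos : (0 : ℝ) < μ.support.toFinset.card :=
      mod_cast card_pos.2 (Set.toFinset_nonempty.2 μ.support_nonempty)
    have h := (le_logb_iff_rpow_le one_lt_two hpos).1
      (hμ ▸ shannonEntropy_le_logb_card_support one_lt_two μ)
    rw [show (2 : ℝ) ^ (2 : ℝ) = 4 by norm_num] at h
    exact_mod_cast h
  exact not_injOn_pairs_of_four_le_card hcard hinj
end

section
/- The uniform matroid U_{3,5} is not 3-entropic: there is no probability distribution on {0,1,2}^5 with random variables X_1,…,X_5 such that the base-3 Shannon entropy satisfies H(X_S) = min(|S|, 3) for every subset S of {1,…,5}. -/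
open scoped Classical BigOperators


lemma perm_affine : ∀ σ : ZMod 3 → ZMod 3, Function.Injective σ →
    ∀ x, σ x = σ 0 + (σ 1 - σ 0) * x := by decide

lemma latin2 (L : ZMod 3 → ZMod 3 → ZMod 3)
    (hx : ∀ y, Function.Injective fun x => L x y)
    (hy : ∀ x, Function.Injective fun y => L x y) :
    ∀ x y, L x y = L 0 0 + (L 1 0 - L 0 0) * x + (L 0 1 - L 0 0) * y := by
  have hrow : ∀ y x, L x y = L 0 y + (L 1 y - L 0 y) * x := by
    intro y x
    exact perm_affine (fun x => L x y) (hx y) x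
  have hd : ∀ y, L 1 y - L 0 y = L 1 0 - L 0 0 := by
    intro y
    by_contra hne
    have hy0 : y ≠ 0 := by rintro rfl; exact hne rfl
    set d := L 1 y - L 0 y
    set d0 := L 1 0 - L 0 0
    have hdd : d - d0 ≠ 0 := sub_ne_zero.2 hne
    set x : ZMod 3 := (L 0 0 - L 0 y) * (d - d0)⁻¹ with hxdef
    have : L x y = L x 0 := by
      rw [hrow y, hrow 0]
      have : (d - d0) * x = L 0 0 - L 0 y := by
        rw [hxdef, ← mul_assoc, mul_comm (d - d0), mul_assoc,
          mul_inv_cancel₀ hdd, mul_one]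
      have h2 : d * x - d0 * x = L 0 0 - L 0 y := by rw [← sub_mul]; exact this
      linear_combination h2
    exact hy0 (hy x this)
  have hcol : ∀ y, L 0 y = L 0 0 + (L 0 1 - L 0 0) * y := by
    intro y; exact perm_affine (fun y => L 0 y) (hy 0) y
  intro x y
  rw [hrow y x, hd y, hcol y]; ring

lemma latin3 (f : ZMod 3 → ZMod 3 → ZMod 3 → ZMod 3)
    (hx : ∀ y z, Function.Injective fun x => f x y z)
    (hy : ∀ x z, Function.Injective fun y => f x y z)
    (hz : ∀ x y, Function.Injective fun z => f x y z) :
    ∀ x y z, f x y z = f 0 0 0 + (f 1 0 0 - f 0 0 0) * x + (f 0 1 0 - f 0 0 0) * y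
      + (f 0 0 1 - f 0 0 0) * z := by
  have hL : ∀ z x y, f x y z = f 0 0 z + (f 1 0 z - f 0 0 z) * x + (f 0 1 z - f 0 0 z) * y := by
    intro z
    exact latin2 (fun x y => f x y z) (fun y => hx y z) (fun x => hy x z)
  have hM : ∀ x z, f x 0 z = f 0 0 0 + (f 1 0 0 - f 0 0 0) * x + (f 0 0 1 - f 0 0 0) * z := by
    intro x z
    exact latin2 (fun x z => f x 0 z) (fun z => hx 0 z) (fun x => hz x 0) x z
  have hN : ∀ y z, f 0 y z = f 0 0 0 + (f 0 1 0 - f 0 0 0) * y + (f 0 0 1 - f 0 0 0) * z := by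
    intro y z
    exact latin2 (fun y z => f 0 y z) (fun z => hy 0 z) (fun y => hz 0 y) y z
  intro x y z
  rw [hL z x y, hM 1 z, hN 0 z, hN 1 z]
  ring

lemma det_ne : ∀ b c b' c' : ZMod 3,
    Function.Injective (fun p : ZMod 3 × ZMod 3 => (b*p.1 + c*p.2, b'*p.1 + c'*p.2)) →
    b*c' - c*b' ≠ 0 := by decide

lemma no_three : ∀ A B C A' B' C' : ZMod 3, A ≠ 0 → B ≠ 0 → C ≠ 0 → A' ≠ 0 → B' ≠ 0 → C' ≠ 0 →
    A*B' - B*A' ≠ 0 → A*C' - C*A' ≠ 0 → B*C' - C*B' ≠ 0 → False := by decide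

lemma core (f g : ZMod 3 → ZMod 3 → ZMod 3 → ZMod 3)
    (hfx : ∀ y z, Function.Injective fun x => f x y z)
    (hfy : ∀ x z, Function.Injective fun y => f x y z)
    (hfz : ∀ x y, Function.Injective fun z => f x y z)
    (hgx : ∀ y z, Function.Injective fun x => g x y z)
    (hgy : ∀ x z, Function.Injective fun y => g x y z)
    (hgz : ∀ x y, Function.Injective fun z => g x y z)
    (hjx : ∀ x, Function.Injective fun p : ZMod 3 × ZMod 3 => (f x p.1 p.2, g x p.1 p.2))
    (hjy : ∀ y, Function.Injective fun p : ZMod 3 × ZMod 3 => (f p.1 y p.2, g p.1 y p.2))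
    (hjz : ∀ z, Function.Injective fun p : ZMod 3 × ZMod 3 => (f p.1 p.2 z, g p.1 p.2 z)) :
    False := by
  set A := f 1 0 0 - f 0 0 0 with hA
  set B := f 0 1 0 - f 0 0 0 with hB
  set C := f 0 0 1 - f 0 0 0 with hC
  set A' := g 1 0 0 - g 0 0 0 with hA'
  set B' := g 0 1 0 - g 0 0 0 with hB'
  set C' := g 0 0 1 - g 0 0 0 with hC'
  have hf := latin3 f hfx hfy hfz
  have hg := latin3 g hgx hgy hgz
  have hAne : A ≠ 0 := sub_ne_zero.2 (fun h => one_ne_zero (hfx 0 0 h))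
  have hBne : B ≠ 0 := sub_ne_zero.2 (fun h => one_ne_zero (hfy 0 0 h))
  have hCne : C ≠ 0 := sub_ne_zero.2 (fun h => one_ne_zero (hfz 0 0 h))
  have hA'ne : A' ≠ 0 := sub_ne_zero.2 (fun h => one_ne_zero (hgx 0 0 h))
  have hB'ne : B' ≠ 0 := sub_ne_zero.2 (fun h => one_ne_zero (hgy 0 0 h))
  have hC'ne : C' ≠ 0 := sub_ne_zero.2 (fun h => one_ne_zero (hgz 0 0 h))
  -- determinant conditions
  have d1 : B*C' - C*B' ≠ 0 := by
    apply det_ne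
    intro p q h
    apply hjx 0
    have h1 : B * p.1 + C * p.2 = B * q.1 + C * q.2 := congrArg Prod.fst h
    have h2 : B' * p.1 + C' * p.2 = B' * q.1 + C' * q.2 := congrArg Prod.snd h
    show (f 0 p.1 p.2, g 0 p.1 p.2) = (f 0 q.1 q.2, g 0 q.1 q.2)
    rw [hf 0 p.1 p.2, hg 0 p.1 p.2, hf 0 q.1 q.2, hg 0 q.1 q.2]
    refine Prod.ext ?_ ?_
    · show _ + _ + _ + _ = _ + _ + _ + _
      linear_combination h1
    · show _ + _ + _ + _ = _ + _ + _ + _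
      linear_combination h2
  have d2 : A*C' - C*A' ≠ 0 := by
    apply det_ne
    intro p q h
    have h1 : A * p.1 + C * p.2 = A * q.1 + C * q.2 := congrArg Prod.fst h
    have h2 : A' * p.1 + C' * p.2 = A' * q.1 + C' * q.2 := congrArg Prod.snd h
    have := hjy 0 (a₁ := p) (a₂ := q) ?_
    · exact this
    show (f p.1 0 p.2, g p.1 0 p.2) = (f q.1 0 q.2, g q.1 0 q.2)
    rw [hf p.1 0 p.2, hg p.1 0 p.2, hf q.1 0 q.2, hg q.1 0 q.2]
    refine Prod.ext ?_ ?_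
    · show _ + _ + _ + _ = _ + _ + _ + _
      linear_combination h1
    · show _ + _ + _ + _ = _ + _ + _ + _
      linear_combination h2
  have d3 : A*B' - B*A' ≠ 0 := by
    apply det_ne
    intro p q h
    have h1 : A * p.1 + B * p.2 = A * q.1 + B * q.2 := congrArg Prod.fst h
    have h2 : A' * p.1 + B' * p.2 = A' * q.1 + B' * q.2 := congrArg Prod.snd h
    have := hjz 0 (a₁ := p) (a₂ := q) ?_
    · exact this
    show (f p.1 p.2 0, g p.1 p.2 0) = (f q.1 q.2 0, g q.1 q.2 0)
    rw [hf p.1 p.2 0, hg p.1 p.2 0, hf q.1 q.2 0, hg q.1 q.2 0]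
    refine Prod.ext ?_ ?_
    · show _ + _ + _ + _ = _ + _ + _ + _
      linear_combination h1
    · show _ + _ + _ + _ = _ + _ + _ + _
      linear_combination h2
  exact no_three A B C A' B' C' hAne hBne hCne hA'ne hB'ne hC'ne d3 d2 d1

noncomputable def kap : Fin 3 ≃ ZMod 3 where
  toFun i := (i.val : ZMod 3)
  invFun x := ⟨x.val, ZMod.val_lt x⟩
  left_inv := by decide
  right_inv := by decide

lemma comb (P : (Fin 5 → Fin 3) → Prop)
    (h : ∀ S : Finset (Fin 5), S.card = 3 → ∀ w : Fin 5 → Fin 3,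
      ∃! v, P v ∧ ∀ i ∈ S, v i = w i) : False := by
  -- uniqueness tool
  have U : ∀ S : Finset (Fin 5), S.card = 3 → ∀ v v', P v → P v' →
      (∀ i ∈ S, v i = v' i) → v = v' := by
    intro S hS v v' hv hv' hag
    obtain ⟨u, -, hu⟩ := h S hS v'
    have h1 := hu v ⟨hv, hag⟩
    have h2 := hu v' ⟨hv', fun i _ => rfl⟩
    rw [h1, h2]
  -- construction
  have hS0 : (({0,1,2} : Finset (Fin 5))).card = 3 := by decide
  set W : ZMod 3 → ZMod 3 → ZMod 3 → (Fin 5 → Fin 3) := fun x y z i =>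
    if i = 0 then kap.symm x else if i = 1 then kap.symm y else kap.symm z with hW
  have hex : ∀ x y z : ZMod 3, ∃ v, (P v ∧ ∀ i ∈ ({0,1,2} : Finset (Fin 5)), v i = W x y z i) :=
    fun x y z => (h _ hS0 (W x y z)).exists
  choose V hV using hex
  have hVP : ∀ x y z, P (V x y z) := fun x y z => (hV x y z).1
  have hV0 : ∀ x y z, V x y z 0 = kap.symm x := fun x y z => (hV x y z).2 0 (by decide)
  have hV1 : ∀ x y z, V x y z 1 = kap.symm y := fun x y z => (hV x y z).2 1 (by decide)
  have hV2 : ∀ x y z, V x y z 2 = kap.symm z := fun x y z => (hV x y z).2 2 (by decide)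
  set f : ZMod 3 → ZMod 3 → ZMod 3 → ZMod 3 := fun x y z => kap (V x y z 3) with hf
  set g : ZMod 3 → ZMod 3 → ZMod 3 → ZMod 3 := fun x y z => kap (V x y z 4) with hg
  -- generic: if two V's agree on a 3-set S, they are equal
  have key : ∀ (S : Finset (Fin 5)), S.card = 3 →
      ∀ x y z x' y' z', (∀ i ∈ S, V x y z i = V x' y' z' i) → V x y z = V x' y' z' :=
    fun S hS x y z x' y' z' hag => U S hS _ _ (hVP x y z) (hVP x' y' z') hag
  have coord : ∀ x y z x' y' z', V x y z = V x' y' z' → x = x' ∧ y = y' ∧ z = z' := by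
    intro x y z x' y' z' hq
    refine ⟨?_, ?_, ?_⟩
    · have := (hV0 x y z).symm.trans ((congrFun hq 0).trans (hV0 x' y' z'))
      exact kap.symm.injective this
    · have := (hV1 x y z).symm.trans ((congrFun hq 1).trans (hV1 x' y' z'))
      exact kap.symm.injective this
    · have := (hV2 x y z).symm.trans ((congrFun hq 2).trans (hV2 x' y' z'))
      exact kap.symm.injective this
  -- membership helpers
  have agree : ∀ (S : Finset (Fin 5)) x y z x' y' z',
      (∀ i ∈ S, V x y z i = V x' y' z' i) → S.card = 3 → x = x' ∧ y = y' ∧ z = z' :=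
    fun S x y z x' y' z' hag hS => coord _ _ _ _ _ _ (key S hS _ _ _ _ _ _ hag)
  -- the nine injectivity conditions
  have hfx : ∀ y z, Function.Injective fun x => f x y z := by
    intro y z x x' hx
    have h3 : V x y z 3 = V x' y z 3 := kap.injective hx
    refine (agree {1,2,3} x y z x' y z ?_ (by decide)).1
    intro i hi
    fin_cases hi
    · rw [hV1, hV1]
    · rw [hV2, hV2]
    · exact h3
  have hfy : ∀ x z, Function.Injective fun y => f x y z := by
    intro x z y y' hx
    have h3 : V x y z 3 = V x y' z 3 := kap.injective hx
    refine (agree {0,2,3} x y z x y' z ?_ (by decide)).2.1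
    intro i hi
    fin_cases hi
    · rw [hV0, hV0]
    · rw [hV2, hV2]
    · exact h3
  have hfz : ∀ x y, Function.Injective fun z => f x y z := by
    intro x y z z' hx
    have h3 : V x y z 3 = V x y z' 3 := kap.injective hx
    refine (agree {0,1,3} x y z x y z' ?_ (by decide)).2.2
    intro i hi
    fin_cases hi
    · rw [hV0, hV0]
    · rw [hV1, hV1]
    · exact h3
  have hgx : ∀ y z, Function.Injective fun x => g x y z := by
    intro y z x x' hx
    have h3 : V x y z 4 = V x' y z 4 := kap.injective hx
    refine (agree {1,2,4} x y z x' y z ?_ (by decide)).1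
    intro i hi
    fin_cases hi
    · rw [hV1, hV1]
    · rw [hV2, hV2]
    · exact h3
  have hgy : ∀ x z, Function.Injective fun y => g x y z := by
    intro x z y y' hx
    have h3 : V x y z 4 = V x y' z 4 := kap.injective hx
    refine (agree {0,2,4} x y z x y' z ?_ (by decide)).2.1
    intro i hi
    fin_cases hi
    · rw [hV0, hV0]
    · rw [hV2, hV2]
    · exact h3
  have hgz : ∀ x y, Function.Injective fun z => g x y z := by
    intro x y z z' hx
    have h3 : V x y z 4 = V x y z' 4 := kap.injective hx
    refine (agree {0,1,4} x y z x y z' ?_ (by decide)).2.2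
    intro i hi
    fin_cases hi
    · rw [hV0, hV0]
    · rw [hV1, hV1]
    · exact h3
  have hjx : ∀ x, Function.Injective fun p : ZMod 3 × ZMod 3 => (f x p.1 p.2, g x p.1 p.2) := by
    intro x p q hpq
    have h3 : V x p.1 p.2 3 = V x q.1 q.2 3 := kap.injective (congrArg Prod.fst hpq)
    have h4 : V x p.1 p.2 4 = V x q.1 q.2 4 := kap.injective (congrArg Prod.snd hpq)
    have := agree {0,3,4} x p.1 p.2 x q.1 q.2 ?_ (by decide)
    · exact Prod.ext this.2.1 this.2.2
    intro i hi
    fin_cases hi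
    · rw [hV0, hV0]
    · exact h3
    · exact h4
  have hjy : ∀ y, Function.Injective fun p : ZMod 3 × ZMod 3 => (f p.1 y p.2, g p.1 y p.2) := by
    intro y p q hpq
    have h3 : V p.1 y p.2 3 = V q.1 y q.2 3 := kap.injective (congrArg Prod.fst hpq)
    have h4 : V p.1 y p.2 4 = V q.1 y q.2 4 := kap.injective (congrArg Prod.snd hpq)
    have := agree {1,3,4} p.1 y p.2 q.1 y q.2 ?_ (by decide)
    · exact Prod.ext this.1 this.2.2
    intro i hi
    fin_cases hi
    · rw [hV1, hV1]
    · exact h3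
    · exact h4
  have hjz : ∀ z, Function.Injective fun p : ZMod 3 × ZMod 3 => (f p.1 p.2 z, g p.1 p.2 z) := by
    intro z p q hpq
    have h3 : V p.1 p.2 z 3 = V q.1 q.2 z 3 := kap.injective (congrArg Prod.fst hpq)
    have h4 : V p.1 p.2 z 4 = V q.1 q.2 z 4 := kap.injective (congrArg Prod.snd hpq)
    have := agree {2,3,4} p.1 p.2 z q.1 q.2 z ?_ (by decide)
    · exact Prod.ext this.1 this.2.1
    intro i hi
    fin_cases hi
    · rw [hV2, hV2]
    · exact h3
    · exact h4
  exact core f g hfx hfy hfz hgx hgy hgz hjx hjy hjz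


section analysis
variable {α : Type*} [Fintype α] {β : Type*} [Fintype β] [DecidableEq β]

/-- Gibbs: entropy equals log of cardinality forces uniformity. -/
lemma gibbs_eq (p : α → ℝ) (h0 : ∀ x, 0 ≤ p x) (h1 : ∑ x, p x = 1)
    (hH : -∑ x, p x * Real.log (p x) = Real.log (Fintype.card α)) :
    ∀ x, p x = (Fintype.card α : ℝ)⁻¹ := by
  have hne : Nonempty α := by
    by_contra h
    rw [not_nonempty_iff] at h
    simp [Finset.univ_eq_empty] at h1
  have hcard : (0:ℝ) < (Fintype.card α : ℝ) := by
    exact_mod_cast Fintype.card_pos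
  set n : ℝ := (Fintype.card α : ℝ) with hn
  set t : α → ℝ := fun x => (n⁻¹ - p x) + p x * Real.log (n * p x) with ht
  have hsum : ∑ x, t x = 0 := by
    have e1 : ∑ x, (n⁻¹ - p x) = 0 := by
      rw [Finset.sum_sub_distrib, h1, Finset.sum_const, Finset.card_univ]
      have : (Fintype.card α : ℝ) * n⁻¹ = 1 := by
        rw [hn]; field_simp
      simp only [nsmul_eq_mul, this, sub_self]
    have e2 : ∑ x, p x * Real.log (n * p x) = 0 := by
      have : ∀ x, p x * Real.log (n * p x) = p x * Real.log n + p x * Real.log (p x) := by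
        intro x
        rcases eq_or_lt_of_le (h0 x) with h | h
        · simp [← h]
        · rw [Real.log_mul (ne_of_gt hcard) (ne_of_gt h)]; ring
      rw [Finset.sum_congr rfl (fun x _ => this x), Finset.sum_add_distrib,
        ← Finset.sum_mul, h1]
      have := hH
      linarith
    rw [ht]
    rw [Finset.sum_add_distrib, e1, e2, add_zero]
  have hnonneg : ∀ x ∈ Finset.univ, 0 ≤ t x := by
    intro x _
    rcases eq_or_lt_of_le (h0 x) with h | h
    · simp [ht, ← h]
      positivity
    · have hu : 0 < n * p x := by positivity
      have hlog : Real.log (n * p x) ≥ 1 - (n * p x)⁻¹ := by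
        have := Real.log_le_sub_one_of_pos (x := (n * p x)⁻¹) (by positivity)
        rw [Real.log_inv] at this
        linarith
      have : p x * Real.log (n * p x) ≥ p x - n⁻¹ := by
        have e : p x * (1 - (n * p x)⁻¹) = p x - n⁻¹ := by
          field_simp
        calc p x * Real.log (n * p x) ≥ p x * (1 - (n * p x)⁻¹) :=
              mul_le_mul_of_nonneg_left hlog (le_of_lt h)
          _ = p x - n⁻¹ := e
      simp only [ht]
      linarith
  have hall : ∀ x ∈ Finset.univ, t x = 0 :=
    (Finset.sum_eq_zero_iff_of_nonneg hnonneg).1 hsum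
  intro x
  have hx := hall x (Finset.mem_univ x)
  rcases eq_or_lt_of_le (h0 x) with h | h
  · exfalso
    rw [ht] at hx
    simp [← h] at hx
    rw [hx] at hcard
    simp at hcard
  · -- p x > 0; show n * p x = 1
    by_contra hne1
    have hu : 0 < n * p x := by positivity
    have hnp : n * p x ≠ 1 := by
      intro hc
      exact hne1 (eq_inv_of_mul_eq_one_right hc)
    have hlog : Real.log (n * p x) > 1 - (n * p x)⁻¹ := by
      have := Real.log_lt_sub_one_of_pos (x := (n * p x)⁻¹) (by positivity)
        (by rwa [ne_eq, inv_eq_one])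
      rw [Real.log_inv] at this
      linarith
    have e : p x * (1 - (n * p x)⁻¹) = p x - n⁻¹ := by field_simp
    have : p x * Real.log (n * p x) > p x - n⁻¹ := by
      calc p x * Real.log (n * p x) > p x * (1 - (n * p x)⁻¹) :=
            (mul_lt_mul_iff_right₀ h).2 hlog
        _ = p x - n⁻¹ := e
    rw [ht] at hx
    simp only at hx
    linarith

/-- reindexing a fiberwise sum -/
lemma fiber_sum (p : α → ℝ) (F : α → β) (φ : β → ℝ) :
    ∑ b, (∑ x ∈ Finset.univ.filter (fun x => F x = b), p x) * φ b
      = ∑ x, p x * φ (F x) := by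
  rw [← Finset.sum_fiberwise Finset.univ F (fun x => p x * φ (F x))]
  refine Finset.sum_congr rfl (fun b _ => ?_)
  rw [Finset.sum_mul]
  refine Finset.sum_congr rfl (fun x hx => ?_)
  rw [(Finset.mem_filter.1 hx).2]

/-- entropy is preserved by injective maps -/
lemma entropy_map_inj (p : α → ℝ) (F : α → β) (hF : Function.Injective F) :
    ∑ b, (∑ x ∈ Finset.univ.filter (fun x => F x = b), p x)
        * Real.log (∑ x ∈ Finset.univ.filter (fun x => F x = b), p x)
      = ∑ x, p x * Real.log (p x) := by
  set q : β → ℝ := fun b => ∑ x ∈ Finset.univ.filter (fun x => F x = b), p x with hq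
  have : ∑ b, q b * Real.log (q b) = ∑ x, p x * Real.log (q (F x)) :=
    fiber_sum p F (fun b => Real.log (q b))
  rw [this]
  refine Finset.sum_congr rfl (fun x _ => ?_)
  have hfil : Finset.univ.filter (fun y => F y = F x) = {x} := by
    ext y
    simp only [Finset.mem_filter, Finset.mem_univ, true_and, Finset.mem_singleton]
    exact ⟨fun h => hF h, fun h => by rw [h]⟩
  have : q (F x) = p x := by
    have h2 : q (F x) = ∑ y ∈ Finset.univ.filter (fun y => F y = F x), p y := rfl
    rw [h2, hfil, Finset.sum_singleton]
  rw [this]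

/-- equality in data processing forces injectivity on the support -/
lemma dpi_eq (p : α → ℝ) (F : α → β) (h0 : ∀ x, 0 ≤ p x)
    (hH : ∑ x, p x * Real.log (p x)
      = ∑ b, (∑ x ∈ Finset.univ.filter (fun x => F x = b), p x)
          * Real.log (∑ x ∈ Finset.univ.filter (fun x => F x = b), p x)) :
    ∀ x y, 0 < p x → 0 < p y → F x = F y → x = y := by
  set q : β → ℝ := fun b => ∑ x ∈ Finset.univ.filter (fun x => F x = b), p x with hq
  have hqF : ∀ x, p x ≤ q (F x) := by
    intro x
    exact Finset.single_le_sum (fun i _ => h0 i)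
      (Finset.mem_filter.2 ⟨Finset.mem_univ x, rfl⟩)
  set u : α → ℝ := fun x => p x * (Real.log (q (F x)) - Real.log (p x)) with hu
  have husum : ∑ x, u x = 0 := by
    have e1 : ∑ x, p x * Real.log (q (F x)) = ∑ b, q b * Real.log (q b) :=
      (fiber_sum p F (fun b => Real.log (q b))).symm
    simp only [hu, mul_sub]
    rw [Finset.sum_sub_distrib, e1, ← hH, sub_self]
  have hunn : ∀ x ∈ Finset.univ, 0 ≤ u x := by
    intro x _
    rcases eq_or_lt_of_le (h0 x) with h | h
    · simp [hu, ← h]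
    · have : Real.log (p x) ≤ Real.log (q (F x)) :=
        Real.log_le_log h (hqF x)
      have : 0 ≤ Real.log (q (F x)) - Real.log (p x) := by linarith
      exact mul_nonneg (le_of_lt h) this
  have hall := (Finset.sum_eq_zero_iff_of_nonneg hunn).1 husum
  have hqp : ∀ x, 0 < p x → q (F x) = p x := by
    intro x hx
    have := hall x (Finset.mem_univ x)
    rw [hu] at this
    simp only at this
    have hlog : Real.log (q (F x)) = Real.log (p x) := by
      rcases mul_eq_zero.1 this with h | h
      · exact absurd h (ne_of_gt hx)
      · linarith [sub_eq_zero.1 h]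
    have hq1 : 0 < q (F x) := lt_of_lt_of_le hx (hqF x)
    have := Real.log_injOn_pos (Set.mem_Ioi.2 hq1) (Set.mem_Ioi.2 hx) hlog
    exact this
  intro x y hx hy hxy
  by_contra hne
  have hsub : ({x, y} : Finset α) ⊆ Finset.univ.filter (fun z => F z = F x) := by
    intro z hz
    rcases Finset.mem_insert.1 hz with h | h
    · subst h; exact Finset.mem_filter.2 ⟨Finset.mem_univ _, rfl⟩
    · rw [Finset.mem_singleton.1 h]
      exact Finset.mem_filter.2 ⟨Finset.mem_univ _, hxy.symm⟩
  have : p x + p y ≤ q (F x) := by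
    rw [hq]
    calc p x + p y = ∑ z ∈ ({x, y} : Finset α), p z := by
          rw [Finset.sum_pair hne]
      _ ≤ _ := Finset.sum_le_sum_of_subset_of_nonneg hsub (fun i _ _ => h0 i)
  rw [hqp x hx] at this
  linarith

end analysis

noncomputable def proj (S : Finset (Fin 5)) (v : Fin 5 → Fin 3) : {i // i ∈ S} → Fin 3 :=
  fun i => v i.1

/-- The uniform matroid `U_{3,5}` is not 3-entropic. -/
theorem U35_not_three_entropic :
    ¬ ∃ μ : PMF (Fin 5 → Fin 3),
      ∀ S : Finset (Fin 5),
        shannonEntropy 3 (marg μ S) = (min S.card 3 : ℕ) := by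
  rintro ⟨μ, hμ⟩
  set p : (Fin 5 → Fin 3) → ℝ := fun v => (μ v).toReal with hp
  have h0 : ∀ v, 0 ≤ p v := fun v => ENNReal.toReal_nonneg
  have hp1 : ∑ v, p v = 1 := by
    have h1 := PMF.tsum_coe μ
    rw [tsum_fintype] at h1
    have := congrArg ENNReal.toReal h1
    rwa [ENNReal.toReal_sum (fun v _ => PMF.apply_ne_top μ v), ENNReal.toReal_one] at this
  have hlog3 : (0:ℝ) < Real.log 3 := Real.log_pos (by norm_num)
  -- the projection maps and fiber sums
  have marg_val : ∀ (S : Finset (Fin 5)) (b : { i // i ∈ S } → Fin 3),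
      ((marg μ S) b).toReal
        = ∑ v ∈ Finset.univ.filter (fun v => proj S v = b), p v := by
    intro S b
    rw [marg, PMF.map_apply, tsum_fintype]
    rw [ENNReal.toReal_sum (fun v _ => by split <;> simp [PMF.apply_ne_top])]
    rw [Finset.sum_filter]
    refine Finset.sum_congr rfl (fun v _ => ?_)
    by_cases h : proj S v = b
    · have h' : b = fun i : {i // i ∈ S} => v i.1 := h.symm
      rw [if_pos h', if_pos h]
    · have h' : ¬ b = fun i : {i // i ∈ S} => v i.1 := fun hc => h hc.symm
      rw [if_neg h', if_neg h, ENNReal.toReal_zero]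
  -- entropy in natural log
  have ent_val : ∀ (S : Finset (Fin 5)),
      -∑ b, (∑ v ∈ Finset.univ.filter (fun v => proj S v = b), p v)
        * Real.log (∑ v ∈ Finset.univ.filter (fun v => proj S v = b), p v)
      = (min S.card 3 : ℕ) * Real.log 3 := by
    intro S
    have h := hμ S
    rw [shannonEntropy] at h
    have h2 : ∀ b : { i // i ∈ S } → Fin 3,
        ((marg μ S) b).toReal * Real.logb 3 ((marg μ S) b).toReal
        = (∑ v ∈ Finset.univ.filter (fun v => proj S v = b), p v)
          * (Real.log (∑ v ∈ Finset.univ.filter (fun v => proj S v = b), p v) / Real.log 3) := by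
      intro b
      rw [marg_val S b, Real.logb]
    rw [Finset.sum_congr rfl (fun b _ => h2 b)] at h
    simp only [← mul_div_assoc] at h
    rw [← Finset.sum_div, ← neg_div, div_eq_iff (ne_of_gt hlog3)] at h
    linarith [h]
  -- full entropy
  have hfull : -∑ v, p v * Real.log (p v) = 3 * Real.log 3 := by
    have hinj : Function.Injective (proj Finset.univ) := by
      intro v v' h
      funext i
      exact congrFun h ⟨i, Finset.mem_univ i⟩
    have he : ∑ b, (∑ v ∈ Finset.univ.filter
          (fun v => proj Finset.univ v = b), p v)
        * Real.log (∑ v ∈ Finset.univ.filter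
          (fun v => proj Finset.univ v = b), p v)
        = ∑ v, p v * Real.log (p v) := entropy_map_inj p (proj Finset.univ) hinj
    have := ent_val Finset.univ
    rw [he] at this
    have hc : ((min (Finset.univ : Finset (Fin 5)).card 3 : ℕ) : ℝ) = 3 := by norm_num
    rw [hc] at this
    linarith [this]
  -- for 3-sets
  have hQ : ∀ (S : Finset (Fin 5)), S.card = 3 → ∀ b,
      (∑ v ∈ Finset.univ.filter (fun v => proj S v = b), p v)
        = (27:ℝ)⁻¹ := by
    intro S hS b
    have hcard : Fintype.card ({ i // i ∈ S } → Fin 3) = 27 := by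
      rw [Fintype.card_fun, Fintype.card_coe, hS]
      norm_num
    have hsum1 : ∑ b, (∑ v ∈ Finset.univ.filter
        (fun v => proj S v = b), p v) = 1 := by
      rw [Finset.sum_fiberwise Finset.univ (proj S) p]
      exact hp1
    have hH : -∑ b, (∑ v ∈ Finset.univ.filter (fun v => proj S v = b), p v)
        * Real.log (∑ v ∈ Finset.univ.filter (fun v => proj S v = b), p v)
        = Real.log (Fintype.card ({ i // i ∈ S } → Fin 3)) := by
      rw [ent_val S, hS, hcard]
      have : ((27:ℕ):ℝ) = (3:ℝ)^(3:ℕ) := by norm_num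
      rw [this, Real.log_pow]
      norm_num
    have := gibbs_eq _ (fun b => Finset.sum_nonneg (fun v _ => h0 v)) hsum1 hH b
    rw [hcard] at this
    rw [this]
    norm_num
  -- injectivity on support for 3-sets
  have hinj3 : ∀ (S : Finset (Fin 5)), S.card = 3 → ∀ v v', 0 < p v → 0 < p v' →
      proj S v = proj S v' → v = v' := by
    intro S hS
    have h1 := ent_val S
    rw [hS] at h1
    have hc : ((min 3 3 : ℕ) : ℝ) = 3 := by norm_num
    rw [hc] at h1
    have hH : ∑ v, p v * Real.log (p v)
        = ∑ b, (∑ v ∈ Finset.univ.filter (fun v => proj S v = b), p v)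
          * Real.log (∑ v ∈ Finset.univ.filter (fun v => proj S v = b), p v) := by
      linarith [hfull, h1]
    exact dpi_eq p (proj S) h0 hH
  -- assemble the ∃! property and conclude
  refine comb (fun v => 0 < p v) ?_
  intro S hS w
  set b : { i // i ∈ S } → Fin 3 := fun i => w i.1 with hb
  have hQb := hQ S hS b
  have hex : ∃ v, 0 < p v ∧ proj S v = b := by
    by_contra hc
    push_neg at hc
    have : ∑ v ∈ Finset.univ.filter (fun v => proj S v = b), p v = 0 := by
      refine Finset.sum_eq_zero (fun v hv => ?_)
      have hmem := (Finset.mem_filter.1 hv).2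
      rcases eq_or_lt_of_le (h0 v) with h | h
      · exact h.symm
      · exact absurd hmem (hc v h)
    rw [hQb] at this
    norm_num at this
  obtain ⟨v, hv, hvb⟩ := hex
  refine ⟨v, ⟨hv, fun i hi => congrFun hvb ⟨i, hi⟩⟩, ?_⟩
  rintro v' ⟨hv', hag⟩
  refine hinj3 S hS v' v hv' hv ?_
  rw [hvb]
  funext i
  exact hag i.1 i.2
end

section
/- Let S ⊆ F_3^3 be a set of 9 vectors such that for any two distinct elements of S, their Hamming distance is at least 2, i.e., fixing any two coordinates determines the third coordinate among members of S. If in addition S contains two elements at Hamming distance exactly 2, then S is, up to permuting symbols in each coordinate, equal to {x ∈ F_3^3 : x_1 + x_2 + x_3 = 0}. -/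
/-!
Two words of a code of minimum distance `2` that agree in all but one coordinate coincide, so
`9 = 3 ^ 2` such words in `F_3 ^ 3` project bijectively onto their first two coordinates: the
code is the graph `x₂ = f x₀ x₁` of a Latin square `f` of order `3`. Normalising the symbols so
that row `0` of `f` reads `b ↦ -b`, every other row avoids `-b` in each column `b` and is
therefore a translate of it; hence `f` is isotopic to `(a, b) ↦ -a - b`.
-/

open Function Finset

section HammingDist

variable {ι : Type*} [Fintype ι] {β : ι → Type*} [∀ i, DecidableEq (β i)]

theorem hammingDist_le_one_of_forall_ne {x y : ∀ i, β i} (i : ι)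
    (h : ∀ j ≠ i, x j = y j) : hammingDist x y ≤ 1 :=
  calc hammingDist x y ≤ ({i} : Finset ι).card :=
        card_le_card fun j hj => mem_singleton.2 <| by_contra fun hji => (mem_filter.1 hj).2 (h j hji)
    _ = 1 := card_singleton i

theorem eq_of_forall_ne_of_two_le_hammingDist {S : Set (∀ i, β i)}
    (hS : ∀ x ∈ S, ∀ y ∈ S, x ≠ y → 2 ≤ hammingDist x y) ⦃x : ∀ i, β i⦄ (hx : x ∈ S)
    ⦃y : ∀ i, β i⦄ (hy : y ∈ S) (i : ι) (h : ∀ j ≠ i, x j = y j) : x = y := by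
  by_contra hxy
  have := hS x hx y hy hxy
  have := hammingDist_le_one_of_forall_ne i h
  omega

end HammingDist

theorem exists_latin_square_of_two_le_hammingDist {β : Type*} [Fintype β] [DecidableEq β]
    {S : Finset (Fin 3 → β)} (hcard : S.card = Fintype.card β ^ 2)
    (hS : ∀ x ∈ S, ∀ y ∈ S, x ≠ y → 2 ≤ hammingDist x y) :
    ∃ f : β → β → β, (∀ a, Injective (f a)) ∧ (∀ b, Injective (f · b)) ∧
      ∀ x ∈ S, x 2 = f (x 0) (x 1) := by
  have hagree := eq_of_forall_ne_of_two_le_hammingDist (S := (S : Set (Fin 3 → β))) hS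
  have hinj : Set.InjOn (fun x : Fin 3 → β => (x 0, x 1)) S := fun x hx y hy hxy =>
    hagree hx hy 2 fun j hj => by
      fin_cases j
      · exact congrArg Prod.fst hxy
      · exact congrArg Prod.snd hxy
      · exact absurd rfl hj
  have hsurj : ∀ a b : β, ∃ x ∈ S, x 0 = a ∧ x 1 = b := by
    have himage : S.image (fun x => (x 0, x 1)) = univ :=
      eq_univ_of_card _ <| by rw [card_image_of_injOn hinj, hcard, Fintype.card_prod, sq]
    intro a b
    obtain ⟨x, hx, hxab⟩ := mem_image.1 (himage ▸ mem_univ (a, b))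
    exact ⟨x, hx, congrArg Prod.fst hxab, congrArg Prod.snd hxab⟩
  choose w hwS hw0 hw1 using hsurj
  have hgraph : ∀ x ∈ S, x = w (x 0) (x 1) := fun x hx =>
    hinj hx (hwS _ _) (Prod.ext (hw0 _ _).symm (hw1 _ _).symm)
  refine ⟨fun a b => w a b 2, fun a b b' hbb' => ?_, fun b a a' haa' => ?_, fun x hx => ?_⟩
  · rw [← hw1 a b, ← hw1 a b', hagree (hwS a b) (hwS a b') 1 fun j hj => by
      fin_cases j
      · exact (hw0 a b).trans (hw0 a b').symm
      · exact absurd rfl hj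
      · exact hbb']
  · rw [← hw0 a b, ← hw0 a' b, hagree (hwS a b) (hwS a' b) 0 fun j hj => by
      fin_cases j
      · exact absurd rfl hj
      · exact (hw1 a b).trans (hw1 a' b).symm
      · exact haa']
  · exact congrFun (hgraph x hx) 2

theorem ZMod.three_apply_eq_apply_zero_sub {r : ZMod 3 → ZMod 3} (hr : Injective r)
    (hne : ∀ b, r b ≠ -b) (b : ZMod 3) : r b = r 0 - b := by
  revert b r; decide

theorem ZMod.three_exists_perm_add_add_eq_zero {f : ZMod 3 → ZMod 3 → ZMod 3}
    (hrow : ∀ a, Injective (f a)) (hcol : ∀ b, Injective (f · b)) :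
    ∃ σ₀ σ₁ σ₂ : Equiv.Perm (ZMod 3), ∀ a b, σ₀ a + σ₁ b + σ₂ (f a b) = 0 := by
  let σ₂ := (Equiv.ofBijective (f 0) (hrow 0).bijective_of_finite).symm.trans (Equiv.neg _)
  set g := fun a b => σ₂ (f a b) with hg
  have hg0 : ∀ b, g 0 b = -b := fun b => by
    simp [hg, σ₂, Equiv.ofBijective_symm_apply_apply]
  have hgcol : ∀ b, Injective (g · b) := fun b => σ₂.injective.comp (hcol b)
  have hgrow : ∀ a b, g a b = g a 0 - b := fun a => by
    rcases eq_or_ne a 0 with rfl | ha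
    · simp [hg0]
    · refine ZMod.three_apply_eq_apply_zero_sub (σ₂.injective.comp (hrow a)) fun b hb => ?_
      exact ha (hgcol b (hb.trans (hg0 b).symm))
  let σ₀ := (Equiv.ofBijective (g · 0) (hgcol 0).bijective_of_finite).trans (Equiv.neg _)
  refine ⟨σ₀, 1, σ₂, fun a b => ?_⟩
  change -g a 0 + b + g a b = 0
  rw [hgrow a b]
  ring

open scoped Classical BigOperators

theorem nine_points_distance_two_general (S : Finset (Fin 3 → ZMod 3))
    (hcard : S.card = 9)
    (hdist : ∀ x ∈ S, ∀ y ∈ S, x ≠ y → 2 ≤ hammingDist x y) :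
    ∃ σ : Fin 3 → Equiv.Perm (ZMod 3),
      S.image (fun x i => σ i (x i)) =
        Finset.univ.filter (fun x : Fin 3 → ZMod 3 => x 0 + x 1 + x 2 = 0) := by
  obtain ⟨f, hrow, hcol, hgraph⟩ := exists_latin_square_of_two_le_hammingDist (by simpa) hdist
  obtain ⟨σ₀, σ₁, σ₂, hf⟩ := ZMod.three_exists_perm_add_add_eq_zero hrow hcol
  refine ⟨![σ₀, σ₁, σ₂], eq_of_subset_of_card_le (fun y hy => ?_) ?_⟩
  · obtain ⟨x, hx, rfl⟩ := mem_image.1 hy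
    simpa [hgraph x hx] using hf (x 0) (x 1)
  · have hinj : Injective fun (x : Fin 3 → ZMod 3) i => ![σ₀, σ₁, σ₂] i (x i) :=
      fun x y hxy => funext fun i => Equiv.injective _ (congrFun hxy i)
    rw [card_image_of_injective S hinj, hcard]
    decide

/-- Let `S ⊆ F_3^3` consist of 9 vectors with pairwise Hamming distance at least 2,
containing two vectors at Hamming distance exactly 2. Then, up to permuting the symbols
in each coordinate, `S` is the set `{x : x_1 + x_2 + x_3 = 0}`. -/
theorem nine_points_distance_two (S : Finset (Fin 3 → ZMod 3))
    (hcard : S.card = 9)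
    (hdist : ∀ x ∈ S, ∀ y ∈ S, x ≠ y → 2 ≤ hammingDist x y)
    (hex : ∃ x ∈ S, ∃ y ∈ S, hammingDist x y = 2) :
    ∃ σ : Fin 3 → Equiv.Perm (ZMod 3),
      S.image (fun x i => σ i (x i)) =
        Finset.univ.filter (fun x : Fin 3 → ZMod 3 => x 0 + x 1 + x 2 = 0) :=
  nine_points_distance_two_general S hcard hdist
end

section
/- Let M = (E, r) be a p-entropic matroid realized by random variables {X_e} with values in F_p, and let i ∈ E with r({i}) = 1. Then the contraction M/{i} is p-entropic: for any value k with P(X_i = k) > 0, the conditional distribution of {X_e}_{e≠i} given X_i = k has base-p entropy function equal to the rank function of M/{i}, i.e., H(X_A | X_i = k) = r(A ∪ {i}) − 1 for all A ⊆ E∖{i}. -/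
open scoped Classical BigOperators

/-- Probability of an event under a PMF on a finite type. -/
noncomputable def prob {α : Type*} [Fintype α] (μ : PMF α) (s : Set α) : ℝ :=
  ∑ x : α, if x ∈ s then (μ x).toReal else 0

/-- Base-`q` Shannon entropy of the variables indexed by `A` under the conditional
distribution given the event `X_i = k`. -/
noncomputable def condEntropyGiven {ι α : Type*} [Fintype ι] [Fintype α]
    (q : ℝ) (μ : PMF (ι → α)) (A : Finset ι) (i : ι) (k : α) : ℝ :=
  -∑ a : ({ j // j ∈ A } → α),
    (prob μ {x | (∀ j : { j // j ∈ A }, x j.1 = a j) ∧ x i = k} /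
        prob μ {x | x i = k}) *
      Real.logb q
        (prob μ {x | (∀ j : { j // j ∈ A }, x j.1 = a j) ∧ x i = k} /
          prob μ {x | x i = k})

/-! Work in base `q = |α|`. For fixed `k`, adding a variable `X_j` to `X_A` raises the conditional
entropy `H(X_A | X_i = k)` by an amount in `[0, 1]`, because `X_j` takes `|α|` values. By the chain
rule the average of these increments over `k`, weighted by `P(X_i = k)`, is
`H(X_{A ∪ {i, j}}) - H(X_{A ∪ {i}})`, an integer. An integral average of numbers in `[0, 1]` forces
every increment of positive weight to equal it, and induction on `A` gives
`H(X_A | X_i = k) = H(X_{A ∪ {i}}) - H(X_i)`. -/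

open Finset Real

noncomputable def entropy (q : ℝ) {β : Type*} [Fintype β] (v : β → ℝ) : ℝ :=
  -∑ b, v b * logb q (v b)

section Entropy

variable {q : ℝ} {α β : Type*} [Fintype α] [Fintype β]

theorem entropy_eq_sum_negMulLog (v : β → ℝ) :
    entropy q v = (∑ b, negMulLog (v b)) / log q := by
  simp only [entropy, negMulLog, logb, neg_mul, sum_neg_distrib, sum_div, mul_div_assoc, neg_div]

theorem entropy_comp_equiv (e : α ≃ β) (v : β → ℝ) : entropy q (v ∘ e) = entropy q v := by
  simp only [entropy, Function.comp_apply, e.sum_comp fun b => v b * logb q (v b)]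

theorem entropy_nonneg (hq : 1 < q) {v : β → ℝ} (h0 : ∀ b, 0 ≤ v b) (h1 : ∀ b, v b ≤ 1) :
    0 ≤ entropy q v := by
  rw [entropy_eq_sum_negMulLog]
  exact div_nonneg (sum_nonneg fun b _ => negMulLog_nonneg (h0 b) (h1 b)) (log_nonneg hq.le)

theorem entropy_le_logb_card (hq : 1 < q) {v : β → ℝ} (h0 : ∀ b, 0 ≤ v b)
    (h1 : ∑ b, v b = 1) : entropy q v ≤ logb q (Fintype.card β) := by
  have hβ : Nonempty β := by
    by_contra h
    rw [not_nonempty_iff] at h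
    simp at h1
  set n : ℝ := (Fintype.card β : ℝ)
  have hn : 0 < n := by positivity
  have jensen := concaveOn_negMulLog.le_map_sum (t := univ) (w := fun _ => n⁻¹) (p := v)
    (fun _ _ => by positivity) (by simp [n, hn.ne']) fun b _ => Set.mem_Ici.2 (h0 b)
  have hval : negMulLog n⁻¹ = n⁻¹ * log n := by rw [negMulLog, log_inv]; ring
  simp only [smul_eq_mul, ← mul_sum, h1, mul_one, hval] at jensen
  rw [entropy_eq_sum_negMulLog, logb]
  exact div_le_div_of_nonneg_right ((mul_le_mul_iff_right₀ (inv_pos.2 hn)).1 jensen)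
    (log_pos hq).le

theorem entropy_prod_chain_rule (v : α × β → ℝ) (hv : ∀ z, 0 ≤ v z) :
    entropy q v = entropy q (fun a => ∑ b, v (a, b)) +
      ∑ a, (∑ b, v (a, b)) * entropy q (fun b => v (a, b) / ∑ b', v (a, b')) := by
  have fiber (a : α) : ∑ b, negMulLog (v (a, b)) = negMulLog (∑ b, v (a, b)) +
      (∑ b, v (a, b)) * ∑ b, negMulLog (v (a, b) / ∑ b', v (a, b')) := by
    rcases (sum_nonneg fun b _ => hv (a, b) : 0 ≤ ∑ b, v (a, b)).eq_or_lt with hu | hu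
    · have hzero (b : β) : v (a, b) = 0 :=
        (sum_eq_zero_iff_of_nonneg fun b _ => hv (a, b)).1 hu.symm b (mem_univ b)
      simp [hzero]
    · set u := ∑ b, v (a, b)
      calc ∑ b, negMulLog (v (a, b)) = ∑ b, negMulLog (u * (v (a, b) / u)) := by
            simp only [mul_div_cancel₀ _ hu.ne']
        _ = ∑ b, (v (a, b) / u * negMulLog u + u * negMulLog (v (a, b) / u)) := by
            simp only [negMulLog_mul]
        _ = _ := by rw [sum_add_distrib, ← sum_mul, ← mul_sum, ← sum_div, div_self hu.ne', one_mul]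
  simp only [entropy_eq_sum_negMulLog, Fintype.sum_prod_type, fiber, sum_add_distrib, add_div,
    sum_div, mul_div_assoc]

theorem entropy_sum_fst_le (hq : 1 < q) {v : α × β → ℝ} (hv : ∀ z, 0 ≤ v z) :
    entropy q (fun b => ∑ a, v (a, b)) ≤ entropy q v := by
  rw [← entropy_comp_equiv (Equiv.prodComm β α) v,
    entropy_prod_chain_rule (v ∘ Equiv.prodComm β α) fun _ => hv _]
  simp only [Function.comp_apply, Equiv.prodComm_apply, Prod.swap_prod_mk]
  refine le_add_of_nonneg_right (sum_nonneg fun b _ => mul_nonneg (sum_nonneg fun a _ => hv _) ?_)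
  exact entropy_nonneg hq (fun a => div_nonneg (hv _) (sum_nonneg fun a _ => hv _))
    fun a => div_le_one_of_le₀ (single_le_sum (fun a _ => hv (a, b)) (mem_univ a))
      (sum_nonneg fun a _ => hv _)

theorem entropy_le_entropy_sum_fst_add (hq : 1 < q) {v : α × β → ℝ} (hv : ∀ z, 0 ≤ v z)
    (hv1 : ∑ z, v z = 1) :
    entropy q v ≤ entropy q (fun b => ∑ a, v (a, b)) + logb q (Fintype.card α) := by
  rw [← entropy_comp_equiv (Equiv.prodComm β α) v,
    entropy_prod_chain_rule (v ∘ Equiv.prodComm β α) fun _ => hv _]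
  simp only [Function.comp_apply, Equiv.prodComm_apply, Prod.swap_prod_mk]
  gcongr
  calc ∑ b, (∑ a, v (a, b)) * entropy q (fun a => v (a, b) / ∑ a', v (a', b))
      ≤ ∑ b, (∑ a, v (a, b)) * logb q (Fintype.card α) := by
        refine sum_le_sum fun b _ => ?_
        rcases (sum_nonneg fun a _ => hv (a, b) : 0 ≤ ∑ a, v (a, b)).eq_or_lt with hu | hu
        · simp [← hu]
        · refine mul_le_mul_of_nonneg_left (entropy_le_logb_card hq
            (fun a => div_nonneg (hv _) hu.le) ?_) hu.le
          rw [← sum_div, div_self hu.ne']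
    _ = logb q (Fintype.card α) := by
        rw [← sum_mul, ← Fintype.sum_prod_type_right, hv1, one_mul]

end Entropy

section Law

variable {Ω β γ : Type*} [Fintype Ω] (μ : PMF Ω)

noncomputable def law (f : Ω → β) (b : β) : ℝ :=
  prob μ {ω | f ω = b}

noncomputable def condLaw (s : Set Ω) (f : Ω → β) (b : β) : ℝ :=
  prob μ {ω | f ω = b ∧ ω ∈ s} / prob μ s

theorem prob_nonneg (s : Set Ω) : 0 ≤ prob μ s :=
  sum_nonneg fun _ _ => by positivity

theorem sum_prob_eq_and [Fintype β] (f : Ω → β) (P : Ω → Prop) :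
    ∑ b, prob μ {ω | f ω = b ∧ P ω} = prob μ {ω | P ω} := by
  simp only [prob, Set.mem_ofPred_eq]
  rw [sum_comm]
  refine sum_congr rfl fun ω _ => ?_
  rw [sum_eq_single (f ω)]
  · simp
  · exact fun b _ hb => if_neg fun h => hb h.1.symm
  · simp

theorem sum_law [Fintype β] (f : Ω → β) : ∑ b, law μ f b = 1 := by
  have hμ := congrArg ENNReal.toReal μ.tsum_coe
  rw [tsum_fintype, ENNReal.toReal_sum fun ω _ => μ.apply_ne_top ω, ENNReal.toReal_one] at hμ
  simpa [law, prob, hμ] using sum_prob_eq_and μ f fun _ => True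

theorem law_nonneg (f : Ω → β) (b : β) : 0 ≤ law μ f b :=
  prob_nonneg μ _

theorem condLaw_nonneg (s : Set Ω) (f : Ω → β) (b : β) : 0 ≤ condLaw μ s f b :=
  div_nonneg (prob_nonneg μ _) (prob_nonneg μ _)

theorem sum_condLaw [Fintype β] {s : Set Ω} (hs : 0 < prob μ s) (f : Ω → β) :
    ∑ b, condLaw μ s f b = 1 := by
  simp only [condLaw, ← sum_div]
  rw [sum_prob_eq_and μ f (· ∈ s), Set.ofPred_mem_eq, div_self hs.ne']

theorem sum_law_pair [Fintype β] (g : Ω → γ) (f : Ω → β) (c : γ) :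
    ∑ b, law μ (fun ω => (g ω, f ω)) (c, b) = law μ g c := by
  simp only [law, Prod.mk.injEq, and_comm (a := g _ = c)]
  exact sum_prob_eq_and μ f _

theorem sum_condLaw_pair [Fintype γ] (s : Set Ω) (g : Ω → γ) (f : Ω → β) (b : β) :
    ∑ c, condLaw μ s (fun ω => (g ω, f ω)) (c, b) = condLaw μ s f b := by
  simp only [condLaw, ← sum_div, Prod.mk.injEq, and_assoc]
  rw [sum_prob_eq_and μ g]

theorem law_pair_div_law (g : Ω → γ) (f : Ω → β) (c : γ) (b : β) :
    law μ (fun ω => (g ω, f ω)) (c, b) / law μ g c = condLaw μ {ω | g ω = c} f b := by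
  simp only [law, condLaw, Prod.mk.injEq, Set.mem_ofPred_eq, and_comm (a := g _ = c)]

theorem law_comp_equiv (f : Ω → β) (e : β ≃ γ) : law μ (e ∘ f) = law μ f ∘ e.symm := by
  ext c
  simp only [law, Function.comp_apply, ← e.eq_symm_apply]

theorem condLaw_comp_equiv (s : Set Ω) (f : Ω → β) (e : β ≃ γ) :
    condLaw μ s (e ∘ f) = condLaw μ s f ∘ e.symm := by
  ext c
  simp only [condLaw, Function.comp_apply, ← e.eq_symm_apply]

variable {q : ℝ} [Fintype β] [Fintype γ]

theorem entropy_law_pair (g : Ω → γ) (f : Ω → β) :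
    entropy q (law μ fun ω => (g ω, f ω)) = entropy q (law μ g) +
      ∑ c, law μ g c * entropy q (condLaw μ {ω | g ω = c} f) := by
  simp only [entropy_prod_chain_rule (law μ fun ω => (g ω, f ω)) fun _ => law_nonneg μ _ _,
    sum_law_pair, law_pair_div_law]

theorem entropy_condLaw_le_pair (hq : 1 < q) (s : Set Ω) (g : Ω → γ) (f : Ω → β) :
    entropy q (condLaw μ s f) ≤ entropy q (condLaw μ s fun ω => (g ω, f ω)) := by
  simpa only [sum_condLaw_pair] using
    entropy_sum_fst_le hq (v := condLaw μ s fun ω => (g ω, f ω)) fun _ => condLaw_nonneg μ s _ _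

theorem entropy_condLaw_pair_le (hq : 1 < q) {s : Set Ω} (hs : 0 < prob μ s) (g : Ω → γ)
    (f : Ω → β) :
    entropy q (condLaw μ s fun ω => (g ω, f ω)) ≤
      entropy q (condLaw μ s f) + logb q (Fintype.card γ) := by
  simpa only [sum_condLaw_pair] using
    entropy_le_entropy_sum_fst_add hq (v := condLaw μ s fun ω => (g ω, f ω))
      (fun _ => condLaw_nonneg μ s _ _) (sum_condLaw μ hs _)

end Law

section Coordinates

variable {E α : Type*}

noncomputable def insertPiEquiv {j : E} {A : Finset E} (hj : j ∉ A) :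
    ({x // x ∈ insert j A} → α) ≃ α × ({x // x ∈ A} → α) :=
  ((subtypeInsertEquivOption hj).arrowCongr (Equiv.refl α)).trans Equiv.piOptionEquivProd

theorem restrict_insert {j : E} {A : Finset E} (hj : j ∉ A) :
    ((insert j A).restrict : (E → α) → {x // x ∈ insert j A} → α) =
      (insertPiEquiv hj).symm ∘ fun x => (x j, A.restrict x) := by
  funext x
  rw [Function.comp_apply, Equiv.eq_symm_apply]
  rfl

variable [Fintype E] [Fintype α] {q : ℝ} (μ : PMF (E → α))

theorem marg_apply_toReal (S : Finset E) (a : S → α) :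
    (marg μ S a).toReal = law μ S.restrict a := by
  rw [marg, PMF.map_apply, tsum_fintype,
    ENNReal.toReal_sum fun _ _ => by split_ifs <;> simp [μ.apply_ne_top]]
  simp only [law, prob, apply_ite ENNReal.toReal, ENNReal.toReal_zero, eq_comm (a := a)]
  exact sum_congr rfl fun x _ => by congr 1

theorem shannonEntropy_marg (S : Finset E) :
    shannonEntropy q (marg μ S) = entropy q (law μ S.restrict) := by
  simp only [shannonEntropy, entropy, marg_apply_toReal]

theorem condEntropyGiven_eq (A : Finset E) (i : E) (k : α) :
    condEntropyGiven q μ A i k = entropy q (condLaw μ {x | x i = k} A.restrict) := by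
  simp only [condEntropyGiven, entropy, condLaw, Set.mem_ofPred_eq, funext_iff, Finset.restrict]

theorem condEntropyGiven_empty (i : E) (k : α) : condEntropyGiven q μ ∅ i k = 0 := by
  simp only [condEntropyGiven, IsEmpty.forall_iff, true_and]
  rcases eq_or_ne (prob μ {x | x i = k}) 0 with h | h <;> simp [h]

theorem shannonEntropy_marg_insert {i : E} {A : Finset E} (hi : i ∉ A) :
    shannonEntropy q (marg μ (insert i A)) = entropy q (law μ (· i)) +
      ∑ k, prob μ {x | x i = k} * condEntropyGiven q μ A i k := by
  rw [shannonEntropy_marg, restrict_insert hi, law_comp_equiv, entropy_comp_equiv,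
    entropy_law_pair]
  simp only [condEntropyGiven_eq]
  rfl

theorem condEntropyGiven_le_insert (hq : 1 < q) (i : E) (k : α) {j : E} {A : Finset E}
    (hj : j ∉ A) : condEntropyGiven q μ A i k ≤ condEntropyGiven q μ (insert j A) i k := by
  rw [condEntropyGiven_eq, condEntropyGiven_eq, restrict_insert hj, condLaw_comp_equiv,
    entropy_comp_equiv]
  exact entropy_condLaw_le_pair μ hq _ _ _

theorem condEntropyGiven_insert_le (hq : 1 < q) {i : E} {k : α} (hk : 0 < prob μ {x | x i = k})
    {j : E} {A : Finset E} (hj : j ∉ A) :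
    condEntropyGiven q μ (insert j A) i k ≤
      condEntropyGiven q μ A i k + logb q (Fintype.card α) := by
  rw [condEntropyGiven_eq, condEntropyGiven_eq, restrict_insert hj, condLaw_comp_equiv,
    entropy_comp_equiv]
  exact entropy_condLaw_pair_le μ hq hk _ _

end Coordinates

theorem eq_intCast_of_sum_mul_eq {κ : Type*} [Fintype κ] {w δ : κ → ℝ} (hw : ∀ k, 0 ≤ w k)
    (hw1 : ∑ k, w k = 1) (hδ : ∀ k, 0 < w k → δ k ∈ Set.Icc 0 1) {n : ℤ}
    (hn : ∑ k, w k * δ k = n) {k : κ} (hk : 0 < w k) : δ k = n := by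
  have weighted (f : κ → ℝ) (hf : ∀ k, 0 < w k → 0 ≤ f k) (k : κ) : 0 ≤ w k * f k := by
    rcases (hw k).eq_or_lt with h | h
    · simp [← h]
    · exact mul_nonneg h.le (hf k h)
  have hlo := weighted δ fun k hk => (hδ k hk).1
  have hhi := weighted (1 - δ ·) fun k hk => sub_nonneg.2 (hδ k hk).2
  have hcompl : ∑ k, w k * (1 - δ k) = 1 - n := by
    simp only [mul_sub, mul_one, sum_sub_distrib, hw1, hn]
  have hn01 : n = 0 ∨ n = 1 := by
    have h0 : (0 : ℝ) ≤ n := hn ▸ sum_nonneg fun k _ => hlo k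
    have h1 : (n : ℝ) ≤ 1 := sub_nonneg.1 (hcompl ▸ sum_nonneg fun k _ => hhi k)
    have : 0 ≤ n ∧ n ≤ 1 := ⟨by exact_mod_cast h0, by exact_mod_cast h1⟩
    omega
  rcases hn01 with rfl | rfl
  · have hzero := (sum_eq_zero_iff_of_nonneg fun k _ => hlo k).1 (by simpa using hn) k
      (mem_univ k)
    simpa [hk.ne'] using hzero
  · have hzero := (sum_eq_zero_iff_of_nonneg fun k _ => hhi k).1 (by simpa using hcompl) k
      (mem_univ k)
    have := (mul_eq_zero.1 hzero).resolve_left hk.ne'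
    push_cast
    linarith

section IntegralEntropies

variable {E α : Type*} [Fintype E] [Fintype α]

theorem condEntropyGiven_insert_eq (hα : 1 < Fintype.card α) (μ : PMF (E → α))
    (hint : ∀ S : Finset E, ∃ n : ℤ, shannonEntropy (Fintype.card α) (marg μ S) = n)
    {i : E} {k : α} (hk : 0 < prob μ {x | x i = k}) {j : E} {A : Finset E} (hj : j ∉ A)
    (hi : i ∉ insert j A) :
    condEntropyGiven (Fintype.card α) μ (insert j A) i k =
      condEntropyGiven (Fintype.card α) μ A i k +
        (shannonEntropy (Fintype.card α) (marg μ (insert i (insert j A))) -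
          shannonEntropy (Fintype.card α) (marg μ (insert i A))) := by
  set q : ℝ := (Fintype.card α : ℝ)
  have hq : 1 < q := Nat.one_lt_cast.2 hα
  obtain ⟨n, hn⟩ : ∃ n : ℤ, shannonEntropy q (marg μ (insert i (insert j A))) -
      shannonEntropy q (marg μ (insert i A)) = n := by
    obtain ⟨n₁, h₁⟩ := hint (insert i (insert j A))
    obtain ⟨n₂, h₂⟩ := hint (insert i A)
    exact ⟨n₁ - n₂, by rw [h₁, h₂]; push_cast; rfl⟩
  set δ := fun k => condEntropyGiven q μ (insert j A) i k - condEntropyGiven q μ A i k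
  have hsum : ∑ k, prob μ {x | x i = k} * δ k = n := by
    rw [← hn, shannonEntropy_marg_insert μ hi,
      shannonEntropy_marg_insert μ fun h => hi (mem_insert_of_mem h)]
    simp only [δ, mul_sub, sum_sub_distrib]
    ring
  have hδ (k : α) (hk : 0 < prob μ {x | x i = k}) : δ k ∈ Set.Icc 0 1 :=
    ⟨sub_nonneg.2 (condEntropyGiven_le_insert μ hq i k hj), sub_le_iff_le_add'.2 <|
      (logb_self_eq_one hq ▸ condEntropyGiven_insert_le μ hq hk hj)⟩
  have := eq_intCast_of_sum_mul_eq (fun k => prob_nonneg μ _) (sum_law μ (· i)) hδ hsum hk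
  rw [hn, ← this]
  ring

theorem condEntropyGiven_eq_sub (hα : 1 < Fintype.card α) (μ : PMF (E → α))
    (hint : ∀ S : Finset E, ∃ n : ℤ, shannonEntropy (Fintype.card α) (marg μ S) = n)
    {i : E} {k : α} (hk : 0 < prob μ {x | x i = k}) {A : Finset E} (hi : i ∉ A) :
    condEntropyGiven (Fintype.card α) μ A i k =
      shannonEntropy (Fintype.card α) (marg μ (insert i A)) -
        shannonEntropy (Fintype.card α) (marg μ {i}) := by
  induction A using Finset.induction_on with
  | empty => rw [condEntropyGiven_empty, insert_empty, sub_self]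
  | insert j A hj ih =>
    rw [condEntropyGiven_insert_eq hα μ hint hk hj hi, ih fun h => hi (mem_insert_of_mem h)]
    ring

end IntegralEntropies

/-- Contraction of a `p`-entropic matroid by an element `i` of rank 1 is `p`-entropic:
conditioning on any positive-probability value `k` of `X_i` yields an entropy function
equal to the rank function of `M/{i}`, i.e. `H(X_A | X_i = k) = r(A ∪ {i}) − 1`. -/
theorem contraction_entropic {E : Type*} [Fintype E] {p : ℕ} [NeZero p] (hp : p.Prime)
    (μ : PMF (E → ZMod p)) (r : Finset E → ℕ)
    (hent : ∀ S : Finset E, shannonEntropy p (marg μ S) = r S)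
    (i : E) (hri : r {i} = 1) :
    ∀ k : ZMod p, 0 < prob μ {x | x i = k} →
      ∀ A : Finset E, i ∉ A →
        condEntropyGiven p μ A i k = (r (insert i A) : ℝ) - 1 := by
  intro k hk A hiA
  have hcard : (Fintype.card (ZMod p) : ℝ) = p := by rw [ZMod.card]
  have hα : 1 < Fintype.card (ZMod p) := by rw [ZMod.card]; exact hp.one_lt
  have key := condEntropyGiven_eq_sub hα μ
    (fun S => ⟨r S, by rw [hcard, hent, Int.cast_natCast]⟩) hk hiA
  rwa [hcard, hent, hent, hri, Nat.cast_one] at key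
end

section
/- Every p-entropic matroid induces a secret-sharing matroid over an alphabet of size p: if M = (E, r) is realized by random variables {X_e} with values in a p-element set S, then the matrix A whose rows are the outcomes of positive probability is a secret-sharing matrix, and the secret-sharing matroid it induces equals M. -/
open scoped Classical BigOperators

/-- The set `n(i,e,Y)` of possible values in column `e` among rows agreeing with row `i`
on the columns in `Y`. -/
noncomputable def nset {I E α : Type*} [Fintype I] (A : I → E → α)
    (i : I) (e : E) (Y : Finset E) : Finset α :=
  (Finset.univ.filter fun j : I => ∀ y ∈ Y, A j y = A i y).image fun j => A j e

/-- A matrix is a secret-sharing matrix if for every column `e` and set of columns `Y`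
not containing `e`, either `n(i,e,Y)` is the whole alphabet for every row `i`, or it is a
singleton for every row `i`. -/
def IsSecretSharingMatrix {I E α : Type*} [Fintype I] [Fintype α] (A : I → E → α) : Prop :=
  ∀ (e : E) (Y : Finset E), e ∉ Y →
    (∀ i : I, nset A i e Y = (Finset.univ : Finset α)) ∨
    (∀ i : I, (nset A i e Y).card = 1)

/-! Write `m_Y(x)` for the mass of the class of `x` under restriction to the columns `Y`, so
that the entropy of the marginal on `Y` is `-∑ μ(x) log_p m_Y(x)`. By induction on `Y`,
`m_Y = p^{-r(Y)}` on the support of `μ`. From `Y` to `Y ∪ {e}`: if the rank does not increase,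
`m_{Y ∪ {e}} ≤ m_Y` forces equality on the support; if it increases, the support on `Y ∪ {e}`
has at most `p · p^{r(Y)} ≤ p^{r(Y ∪ {e})}` points, so Gibbs' inequality `H ≤ log_p |support|`
is tight, which again forces uniformity. Uniform marginals give both claims: the support on `Y`
has `p^{r(Y)}` points, and every `n(i,e,Y)` has `p^{r(Y ∪ {e}) - r(Y)}` elements, a number
between `1` and `p`, hence `1` or `p`. -/

open Finset

section FiberMass

open Real

variable {β γ δ : Type*} [Fintype β] [DecidableEq γ] [DecidableEq δ] (μ : PMF β)

lemma PMF.sum_toReal_eq_one : ∑ x, (μ x).toReal = 1 := by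
  rw [← ENNReal.toReal_sum fun x _ => μ.apply_ne_top x, ← tsum_fintype (L := .unconditional _),
    μ.tsum_coe, ENNReal.toReal_one]

noncomputable def fiberMass (g : β → γ) (x : β) : ℝ :=
  ∑ x' ∈ univ.filter (fun x' => g x' = g x), (μ x').toReal

lemma PMF.toReal_map_apply_s14 (g : β → γ) (c : γ) :
    ((μ.map g) c).toReal = ∑ x ∈ univ.filter (fun x => g x = c), (μ x).toReal := by
  rw [PMF.map_apply, tsum_fintype, ENNReal.toReal_sum fun x _ => by
    split_ifs <;> simp [μ.apply_ne_top], sum_filter]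
  exact sum_congr rfl fun x _ => by split_ifs with h h' h' <;> simp_all [eq_comm]

lemma shannonEntropy_map [Fintype γ] (q : ℝ) (g : β → γ) :
    shannonEntropy q (μ.map g) = -∑ x, (μ x).toReal * logb q (fiberMass μ g x) := by
  simp only [shannonEntropy, PMF.toReal_map_apply_s14, sum_mul]
  rw [← sum_fiberwise univ g fun x => (μ x).toReal * logb q (fiberMass μ g x)]
  refine congrArg _ (sum_congr rfl fun c _ => sum_congr rfl fun x hx => ?_)
  rw [(mem_filter.mp hx).2.symm]
  rfl

lemma toReal_le_fiberMass (g : β → γ) (x : β) : (μ x).toReal ≤ fiberMass μ g x :=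
  single_le_sum (f := fun x => (μ x).toReal) (fun _ _ => ENNReal.toReal_nonneg)
    (mem_filter.mpr ⟨mem_univ x, rfl⟩)

lemma fiberMass_pos (g : β → γ) {x : β} (hx : μ x ≠ 0) : 0 < fiberMass μ g x :=
  (ENNReal.toReal_pos hx (μ.apply_ne_top x)).trans_le (toReal_le_fiberMass μ g x)

lemma fiberMass_le_fiberMass_comp (φ : γ → δ) (g : β → γ) (x : β) :
    fiberMass μ g x ≤ fiberMass μ (φ ∘ g) x :=
  sum_le_sum_of_subset_of_nonneg
    (fun x' hx' => mem_filter.mpr ⟨mem_univ x', by simp [(mem_filter.mp hx').2]⟩)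
    fun _ _ _ => ENNReal.toReal_nonneg

lemma fiberMass_of_subsingleton [Subsingleton γ] (g : β → γ) (x : β) :
    fiberMass μ g x = 1 := by
  rw [fiberMass, filter_true_of_mem fun _ _ => Subsingleton.elim _ _, μ.sum_toReal_eq_one]

lemma fiberMass_eq_inv_pow_of_subsingleton [Fintype γ] [Subsingleton γ] {q : ℝ} {k : ℕ}
    (g : β → γ) (hent : shannonEntropy q (μ.map g) = k) (x : β) :
    fiberMass μ g x = (q ^ k)⁻¹ := by
  have hk : k = 0 := by
    simpa [shannonEntropy_map, fiberMass_of_subsingleton, eq_comm] using hent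
  rw [fiberMass_of_subsingleton, hk, pow_zero, inv_one]

lemma fiberMass_eq_sum_support (g : β → γ) (x : β) :
    fiberMass μ g x =
      ∑ j ∈ univ.filter (fun j : {x // μ x ≠ 0} => g j = g x), (μ j).toReal := by
  have hsub : univ.filter (fun j : {x // μ x ≠ 0} => g j = g x) =
      (univ.filter fun x' => g x' = g x).subtype (fun x' => μ x' ≠ 0) := by
    ext; simp
  rw [hsub, sum_subtype_eq_sum_filter (fun x' => (μ x').toReal), fiberMass]
  exact (sum_filter_of_ne fun x' _ hx' hμ => by simp [hμ] at hx').symm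

lemma sum_div_fiberMass (g : β → γ) :
    ∑ x, (μ x).toReal / fiberMass μ g x = #(univ.image fun j : {x // μ x ≠ 0} => g j) := by
  have hsupp : ∑ x, (μ x).toReal / fiberMass μ g x =
      ∑ j : {x // μ x ≠ 0}, (μ j).toReal / fiberMass μ g j := by
    rw [← sum_filter_of_ne (p := fun x => μ x ≠ 0) fun x _ hx hμ => by simp [hμ] at hx]
    exact sum_subtype _ (by simp) _
  rw [hsupp, card_eq_sum_ones, Nat.cast_sum, Nat.cast_one]
  refine (sum_image' (ι := γ) (fun j : {x // μ x ≠ 0} => (μ j).toReal / fiberMass μ g j)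
    fun j _ => ?_).symm
  have hfiber : ∀ j' ∈ univ.filter (fun j' : {x // μ x ≠ 0} => g j' = g j),
      (μ j').toReal / fiberMass μ g j' = (μ j').toReal / fiberMass μ g j := fun j' hj' => by
    simp only [fiberMass, (mem_filter.mp hj').2]
  rw [sum_congr rfl hfiber, ← sum_div, ← fiberMass_eq_sum_support,
    div_self (fiberMass_pos μ g j.2).ne']

lemma card_image_mul_eq_fiberMass {ε : Type*} [DecidableEq ε] {g : β → γ} {f : β → δ}
    {h : β → ε} (hh : ∀ x x', h x' = h x ↔ g x' = g x ∧ f x' = f x) {c : ℝ}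
    (hc : ∀ x, μ x ≠ 0 → fiberMass μ h x = c) (x : β) :
    #((univ.filter fun j : {x // μ x ≠ 0} => g j = g x).image fun j : {x // μ x ≠ 0} => f j) *
      c = fiberMass μ g x := by
  rw [fiberMass_eq_sum_support, ← nsmul_eq_mul, ← sum_const]
  refine sum_image' (ι := δ) (fun j : {x // μ x ≠ 0} => (μ j).toReal) fun j hj => ?_
  rw [← hc j j.2, fiberMass_eq_sum_support, filter_filter]
  refine sum_congr (filter_congr fun j' _ => ?_) fun _ _ => rfl
  rw [hh, (mem_filter.mp hj).2]

lemma card_image_eq_pow_of_fiberMass_eq {g : β → γ} {q : ℝ} {k : ℕ}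
    (hg : ∀ x, μ x ≠ 0 → fiberMass μ g x = (q ^ k)⁻¹) :
    (#(univ.image fun j : {x // μ x ≠ 0} => g j) : ℝ) = q ^ k := by
  rw [← sum_div_fiberMass]
  calc ∑ x, (μ x).toReal / fiberMass μ g x = ∑ x, (μ x).toReal * q ^ k :=
        sum_congr rfl fun x _ => by
          by_cases hx : μ x = 0
          · simp [hx]
          · rw [hg x hx, div_inv_eq_mul]
    _ = q ^ k := by rw [← sum_mul, μ.sum_toReal_eq_one, one_mul]

end FiberMass

section Gibbs

open Real

variable {β : Type*} [Fintype β] {w m : β → ℝ} {c : ℝ}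

lemma eq_of_le_of_log_le_sum_mul_log (hw : ∀ x, 0 ≤ w x) (hw1 : ∑ x, w x = 1)
    (hm : ∀ x, w x ≠ 0 → 0 < m x) (hmc : ∀ x, w x ≠ 0 → m x ≤ c)
    (hlog : log c ≤ ∑ x, w x * log (m x)) : ∀ x, w x ≠ 0 → m x = c := by
  have hterm : ∀ x ∈ univ, 0 ≤ w x * (log c - log (m x)) := fun x _ => by
    by_cases hx : w x = 0
    · simp [hx]
    · exact mul_nonneg (hw x) (sub_nonneg.mpr (log_le_log (hm x hx) (hmc x hx)))
  have hsum : ∑ x, w x * (log c - log (m x)) = 0 := by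
    refine le_antisymm ?_ (sum_nonneg hterm)
    simp only [mul_sub, sum_sub_distrib, ← sum_mul, hw1, one_mul]
    linarith
  intro x hx
  have hzero := (sum_eq_zero_iff_of_nonneg hterm).mp hsum x (mem_univ x)
  have hlog_eq : log (m x) = log c := by
    linarith [(mul_eq_zero.mp hzero).resolve_left hx]
  exact log_injOn_pos (hm x hx) ((hm x hx).trans_le (hmc x hx)) hlog_eq

lemma eq_of_sum_mul_log_le_log_of_mul_sum_div_le (hw : ∀ x, 0 ≤ w x) (hw1 : ∑ x, w x = 1)
    (hm : ∀ x, w x ≠ 0 → 0 < m x) (hc : 0 < c) (hdiv : c * ∑ x, w x / m x ≤ 1)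
    (hlog : ∑ x, w x * log (m x) ≤ log c) : ∀ x, w x ≠ 0 → m x = c := by
  -- `log t ≤ t - 1` at `t = c / m x`, with equality only at `t = 1`
  have hterm : ∀ x ∈ univ, 0 ≤ w x * (c / m x - 1 - log (c / m x)) := fun x _ => by
    by_cases hx : w x = 0
    · simp [hx]
    · have := log_le_sub_one_of_pos (div_pos hc (hm x hx))
      exact mul_nonneg (hw x) (by linarith)
  have hexpand : ∀ x ∈ univ, w x * (c / m x - 1 - log (c / m x)) =
      c * (w x / m x) - w x - w x * log c + w x * log (m x) := fun x _ => by
    by_cases hx : w x = 0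
    · simp [hx]
    · rw [log_div hc.ne' (hm x hx).ne']
      ring
  have hsum : ∑ x, w x * (c / m x - 1 - log (c / m x)) = 0 := by
    refine le_antisymm ?_ (sum_nonneg hterm)
    rw [sum_congr rfl hexpand]
    simp only [sum_add_distrib, sum_sub_distrib, ← mul_sum, ← sum_mul, hw1, one_mul]
    linarith
  intro x hx
  have hzero := (mul_eq_zero.mp
    ((sum_eq_zero_iff_of_nonneg hterm).mp hsum x (mem_univ x))).resolve_left hx
  have hratio : c / m x = 1 := by
    by_contra hne
    linarith [log_lt_sub_one_of_pos (div_pos hc (hm x hx)) hne]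
  exact ((div_eq_one_iff_eq (hm x hx).ne').mp hratio).symm

end Gibbs

section Refinement

open Real

variable {β γ δ : Type*} [Fintype β] [Fintype δ] [DecidableEq γ] [DecidableEq δ]
  (μ : PMF β)

lemma fiberMass_eq_inv_pow_of_refines {g : β → γ} {h : β → δ} (φ : δ → γ)
    (hφ : φ ∘ h = g) {q : ℝ} (hq : 1 < q) {k k' : ℕ}
    (hg : ∀ x, μ x ≠ 0 → fiberMass μ g x = (q ^ k)⁻¹)
    (hcard : (#(univ.image fun j : {x // μ x ≠ 0} => h j) : ℝ) ≤
      q * #(univ.image fun j : {x // μ x ≠ 0} => g j))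
    (hent : shannonEntropy q (μ.map h) = k') :
    ∀ x, μ x ≠ 0 → fiberMass μ h x = (q ^ k')⁻¹ := by
  have hw : ∀ x, 0 ≤ (μ x).toReal := fun _ => ENNReal.toReal_nonneg
  have hsupp : ∀ x, (μ x).toReal ≠ 0 → μ x ≠ 0 := fun x hx h0 => hx (by simp [h0])
  have hm : ∀ x, (μ x).toReal ≠ 0 → 0 < fiberMass μ h x :=
    fun x hx => fiberMass_pos μ h (hsupp x hx)
  have hlog : ∑ x, (μ x).toReal * log (fiberMass μ h x) = log (q ^ k')⁻¹ := by
    rw [shannonEntropy_map] at hent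
    have hlogq : log q ≠ 0 := (log_pos hq).ne'
    simp only [logb, mul_div_assoc', ← sum_div] at hent
    rw [log_inv, log_pow]
    field_simp at hent
    linarith
  intro x hx
  have hwx : (μ x).toReal ≠ 0 := ENNReal.toReal_ne_zero.mpr ⟨hx, μ.apply_ne_top x⟩
  rcases le_or_gt k' k with hkk | hkk
  · refine eq_of_le_of_log_le_sum_mul_log hw μ.sum_toReal_eq_one hm (fun x hx => ?_) hlog.ge x hwx
    calc fiberMass μ h x ≤ fiberMass μ g x := hφ ▸ fiberMass_le_fiberMass_comp μ φ h x
      _ = (q ^ k)⁻¹ := hg x (hsupp x hx)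
      _ ≤ (q ^ k')⁻¹ := inv_anti₀ (by positivity) (pow_le_pow_right₀ hq.le hkk)
  · refine eq_of_sum_mul_log_le_log_of_mul_sum_div_le hw μ.sum_toReal_eq_one hm (by positivity)
      ?_ hlog.le x hwx
    rw [sum_div_fiberMass]
    rw [card_image_eq_pow_of_fiberMass_eq μ hg] at hcard
    calc (q ^ k')⁻¹ * #(univ.image fun j : {x // μ x ≠ 0} => h j)
        ≤ (q ^ k')⁻¹ * q ^ (k + 1) := by rw [pow_succ']; gcongr
      _ ≤ (q ^ k')⁻¹ * q ^ k' := by gcongr; exacts [hq.le, hkk]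
      _ = 1 := inv_mul_cancel₀ (by positivity)

end Refinement

lemma Nat.eq_of_mul_pow_eq_pow_of_ne {n p a b : ℕ} (hn : 1 ≤ n) (hnp : n ≤ p)
    (h : n * p ^ a = p ^ b) (hab : b ≠ a) : n = p := by
  rcases Nat.lt_or_ge 1 p with hp | hp
  · have hab' : a < b := lt_of_le_of_ne
      ((Nat.pow_le_pow_iff_right hp).mp (h ▸ Nat.le_mul_of_pos_left _ hn)) hab.symm
    have hpn : p * p ^ a ≤ n * p ^ a := by
      rw [h, ← pow_succ']
      exact Nat.pow_le_pow_right (by omega) hab'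
    exact le_antisymm hnp (Nat.le_of_mul_le_mul_right hpn (by positivity))
  · omega

section Restriction

variable {E α : Type*}

lemma Finset.restrict_eq_restrict_iff {s : Finset E} {f g : E → α} :
    s.restrict f = s.restrict g ↔ ∀ i ∈ s, f i = g i := by
  simp [funext_iff]

lemma Finset.restrict_insert_eq_restrict_insert_iff {e : E} {Y : Finset E} {f g : E → α} :
    (insert e Y).restrict f = (insert e Y).restrict g ↔
      Y.restrict f = Y.restrict g ∧ f e = g e := by
  simp only [restrict_eq_restrict_iff, forall_mem_insert]
  tauto

lemma card_image_restrict_insert_le [Fintype α] {ι : Type*} (S : Finset ι) (F : ι → E → α)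
    (e : E) (Y : Finset E) :
    #(S.image fun j => (insert e Y).restrict (F j)) ≤
      Fintype.card α * #(S.image fun j => Y.restrict (F j)) := by
  have himage : (S.image fun j => (insert e Y).restrict (F j)).image
      (restrict₂ (π := fun _ => α) (subset_insert e Y)) =
        S.image fun j => Y.restrict (F j) := by
    rw [image_image]
    rfl
  rw [← himage]
  refine card_le_mul_card_image _ _ fun b _ => ?_
  -- on a fibre of the restriction to `Y`, a function on `insert e Y` is fixed by its value at `e`
  refine card_le_card_of_injOn (fun s => s ⟨e, mem_insert_self e Y⟩)
    (fun _ _ => mem_coe.mpr (mem_univ _)) fun s hs s' hs' hse => funext fun i => ?_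
  have hY : restrict₂ (π := fun _ => α) (subset_insert e Y) s =
      restrict₂ (π := fun _ => α) (subset_insert e Y) s' :=
    (mem_filter.mp hs).2.trans (mem_filter.mp hs').2.symm
  rcases mem_insert.mp i.2 with hi | hi
  · obtain rfl : i = ⟨e, mem_insert_self e Y⟩ := Subtype.ext hi
    exact hse
  · exact congrFun hY ⟨i, hi⟩

variable [Fintype E] [Fintype α]

lemma fiberMass_restrict_eq_inv_pow (μ : PMF (E → α)) (r : Finset E → ℕ)
    (hent : ∀ Y, shannonEntropy (Fintype.card α) (marg μ Y) = r Y) (Y : Finset E) :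
    ∀ x, μ x ≠ 0 → fiberMass μ Y.restrict x = ((Fintype.card α : ℝ) ^ r Y)⁻¹ := by
  rcases le_or_gt (Fintype.card α) 1 with hα | hα
  · have : Subsingleton α := Fintype.card_le_one_iff_subsingleton.mp hα
    exact fun x _ => fiberMass_eq_inv_pow_of_subsingleton μ Y.restrict (hent Y) x
  induction Y using Finset.induction_on with
  | empty => exact fun x _ => fiberMass_eq_inv_pow_of_subsingleton μ _ (hent ∅) x
  | @insert e Y _ ih =>
    refine fiberMass_eq_inv_pow_of_refines μ (g := Y.restrict) (h := (insert e Y).restrict)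
      _ (restrict₂_comp_restrict (subset_insert e Y)) (by exact_mod_cast hα) ih ?_
      (hent (insert e Y))
    exact_mod_cast card_image_restrict_insert_le univ (fun j : {x // μ x ≠ 0} => j.1) e Y

lemma card_nset_mul_pow (μ : PMF (E → α)) (r : Finset E → ℕ)
    (hmass : ∀ Y x, μ x ≠ 0 →
      fiberMass μ Y.restrict x = ((Fintype.card α : ℝ) ^ r Y)⁻¹)
    (i : {x // μ x ≠ 0}) (e : E) (Y : Finset E) :
    #(nset (fun j : {x // μ x ≠ 0} => (j : E → α)) i e Y) * Fintype.card α ^ r Y =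
      Fintype.card α ^ r (insert e Y) := by
  have hp : (Fintype.card α : ℝ) ≠ 0 := by
    have : Nonempty α := ⟨i.1 e⟩
    positivity
  have hh : ∀ x x' : E → α, (insert e Y).restrict x' = (insert e Y).restrict x ↔
      Y.restrict x' = Y.restrict x ∧ x' e = x e :=
    fun _ _ => restrict_insert_eq_restrict_insert_iff
  have key := card_image_mul_eq_fiberMass μ hh (hmass (insert e Y)) i
  have hnset : nset (fun j : {x // μ x ≠ 0} => (j : E → α)) i e Y =
      (univ.filter fun j : {x // μ x ≠ 0} => Y.restrict j.1 = Y.restrict i.1).image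
        fun j => j.1 e := by
    ext a
    simp only [nset, mem_image, mem_filter, mem_univ, true_and, restrict_eq_restrict_iff]
  rw [hmass Y i i.2, ← hnset] at key
  field_simp at key
  exact_mod_cast key

end Restriction

lemma apply_mem_nset {I E α : Type*} [Fintype I] (A : I → E → α) (i : I) (e : E)
    (Y : Finset E) : A i e ∈ nset A i e Y :=
  mem_image_of_mem _ (mem_filter.mpr ⟨mem_univ i, fun _ _ => rfl⟩)

/-- Every `p`-entropic matroid is a secret-sharing matroid over an alphabet of size `p`:
the matrix whose rows are the positive-probability outcomes is a secret-sharing matrix,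
and the secret-sharing matroid it induces (rank `Y ↦ log_{|α|}` of the number of distinct
rows on the columns `Y`) coincides with the given matroid. -/
theorem entropic_is_secret_sharing {E α : Type*} [Fintype E] [Fintype α]
    (μ : PMF (E → α)) (r : Finset E → ℕ)
    (hent : ∀ S : Finset E, shannonEntropy (Fintype.card α) (marg μ S) = r S) :
    IsSecretSharingMatrix (fun i : {x : E → α // μ x ≠ 0} => (i.1 : E → α)) ∧
    ∀ Y : Finset E,
      (Finset.univ.image
          fun i : {x : E → α // μ x ≠ 0} => fun y : {e // e ∈ Y} => i.1 y.1).card =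
        Fintype.card α ^ r Y := by
  have hmass := fiberMass_restrict_eq_inv_pow μ r hent
  refine ⟨fun e Y _ => ?_,
    fun Y => by exact_mod_cast card_image_eq_pow_of_fiberMass_eq μ (hmass Y)⟩
  have hcard := fun i => card_nset_mul_pow μ r hmass i e Y
  have hcard_pos := fun i =>
    card_pos.mpr ⟨_, apply_mem_nset (fun j : {x // μ x ≠ 0} => j.1) i e Y⟩
  by_cases hr : r (insert e Y) = r Y
  · refine Or.inr fun i => Nat.eq_of_mul_eq_mul_right ?_ ((hcard i).trans ?_)
    · exact pow_pos (Fintype.card_pos_iff.mpr ⟨i.1 e⟩) _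
    · rw [hr, one_mul]
  · exact Or.inl fun i => eq_univ_of_card _
      (Nat.eq_of_mul_pow_eq_pow_of_ne (hcard_pos i) (card_le_univ _) (hcard i) hr)
end

section
/- Every secret-sharing matroid with alphabet S is |S|-entropic: if A is a secret-sharing matrix with distinct rows inducing matroid M, then the number of rows of A is a power |S|^r of |S|, and the uniform distribution on the rows of A has base-|S| entropy function equal to the rank function of M; moreover, for every Y ⊆ E, the marginal distribution on columns Y is uniform on the distinct rows of A[Y]. -/
open scoped Classical BigOperators

section Aux

variable {I E α : Type*} [Fintype I] [Fintype α]

/-- The fiber of row `i`: rows agreeing with row `i` on all columns of `Y`. -/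
noncomputable def fib (A : I → E → α) (Y : Finset E) (i : I) : Finset I :=
  Finset.univ.filter fun j : I => ∀ y ∈ Y, A j y = A i y

lemma mem_fib {A : I → E → α} {Y : Finset E} {i j : I} :
    j ∈ fib A Y i ↔ ∀ y ∈ Y, A j y = A i y := by
  simp [fib]

lemma self_mem_fib {A : I → E → α} {Y : Finset E} {i : I} : i ∈ fib A Y i :=
  mem_fib.mpr fun _ _ => rfl

lemma nset_eq_image (A : I → E → α) (i : I) (e : E) (Y : Finset E) :
    nset A i e Y = (fib A Y i).image fun j => A j e := rfl

/-- All fibers of a secret-sharing matrix with distinct rows have cardinality a power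
of the alphabet size, independent of the row. -/
lemma fib_card_pow [Fintype E] (A : I → E → α) (hinj : Function.Injective A)
    (hss : IsSecretSharingMatrix A) (Y : Finset E) :
    ∃ m : ℕ, ∀ i : I, (fib A Y i).card = Fintype.card α ^ m := by
  suffices h : ∀ n : ℕ, ∀ Y : Finset E, Yᶜ.card ≤ n →
      ∃ m : ℕ, ∀ i : I, (fib A Y i).card = Fintype.card α ^ m from h Yᶜ.card Y le_rfl
  intro n
  induction n with
  | zero =>
    intro Y hY
    have hYc : Yᶜ = (∅ : Finset E) := Finset.card_eq_zero.mp (Nat.le_zero.mp hY)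
    have hYu : Y = Finset.univ := by
      have := congrArg (fun s => sᶜ) hYc
      simpa using this
    subst hYu
    refine ⟨0, fun i => ?_⟩
    have hfi : fib A Finset.univ i = {i} := by
      ext j
      simp only [mem_fib, Finset.mem_singleton]
      constructor
      · intro h; exact hinj (funext fun y => h y (Finset.mem_univ y))
      · rintro rfl; exact fun y _ => rfl
    simp [hfi]
  | succ n ih =>
    intro Y hY
    by_cases hYu : Y = Finset.univ
    · subst hYu
      refine ⟨0, fun i => ?_⟩
      have hfi : fib A Finset.univ i = {i} := by
        ext j
        simp only [mem_fib, Finset.mem_singleton]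
        constructor
        · intro h; exact hinj (funext fun y => h y (Finset.mem_univ y))
        · rintro rfl; exact fun y _ => rfl
      simp [hfi]
    · obtain ⟨e, he⟩ : ∃ e, e ∈ Yᶜ := by
        rcases Finset.eq_empty_or_nonempty Yᶜ with h | h
        · exfalso
          apply hYu
          have := congrArg (fun s => sᶜ) h
          simpa using this
        · exact h
      have heY : e ∉ Y := Finset.mem_compl.mp he
      set Y' := insert e Y with hY'def
      have hcompl : Y'ᶜ.card ≤ n := by
        have h1 : Y'ᶜ = Yᶜ.erase e := by
          ext x
          simp [hY'def, and_comm]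
        rw [h1, Finset.card_erase_of_mem he]
        omega
      obtain ⟨m, hm⟩ := ih Y' hcompl
      rcases hss e Y heY with hfull | hsing
      · -- full case: fiber splits into |α| fibers of Y'
        refine ⟨m + 1, fun i => ?_⟩
        have hcount := Finset.card_eq_sum_card_fiberwise
          (s := fib A Y i) (t := (Finset.univ : Finset α)) (f := fun j => A j e)
          (fun x _ => Finset.mem_univ _)
        have hfiber : ∀ v : α,
            ((fib A Y i).filter fun j => A j e = v).card = Fintype.card α ^ m := by
          intro v
          have hv : v ∈ nset A i e Y := by rw [hfull i]; exact Finset.mem_univ v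
          rw [nset_eq_image] at hv
          obtain ⟨j, hj, hje⟩ := Finset.mem_image.mp hv
          have hjY : ∀ y ∈ Y, A j y = A i y := mem_fib.mp hj
          have hset : ((fib A Y i).filter fun k => A k e = v) = fib A Y' j := by
            ext k
            simp only [Finset.mem_filter, mem_fib, hY'def, Finset.mem_insert]
            constructor
            · rintro ⟨hk, hke⟩ y hy
              rcases hy with rfl | hy
              · rw [hke, hje]
              · rw [hk y hy, hjY y hy]
            · intro hk
              constructor
              · intro y hy
                rw [hk y (Or.inr hy), hjY y hy]
              · rw [hk e (Or.inl rfl), hje]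
          rw [hset]; exact hm j
        rw [hcount]
        simp only [hfiber]
        rw [Finset.sum_const, Finset.card_univ, smul_eq_mul, pow_succ, mul_comm]
      · -- singleton case: fiber of Y equals fiber of Y'
        refine ⟨m, fun i => ?_⟩
        have hset : fib A Y i = fib A Y' i := by
          ext j
          simp only [mem_fib, hY'def, Finset.mem_insert]
          constructor
          · intro hj y hy
            rcases hy with hye | hy
            · -- use that nset has card 1
              rw [hye]
              obtain ⟨a, ha⟩ := Finset.card_eq_one.mp (hsing i)
              have hji : A j e ∈ nset A i e Y := by
                rw [nset_eq_image]
                exact Finset.mem_image_of_mem _ (mem_fib.mpr hj)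
              have hii : A i e ∈ nset A i e Y := by
                rw [nset_eq_image]
                exact Finset.mem_image_of_mem _ self_mem_fib
              rw [ha, Finset.mem_singleton] at hji hii
              rw [hji, hii]
            · exact hj y hy
          · intro hj y hy
            exact hj y (Or.inr hy)
        rw [hset]; exact hm i

end Aux

/-- Every secret-sharing matroid with alphabet `α` is `|α|`-entropic: for a
secret-sharing matrix `A` with distinct rows, the number of rows is a power of `|α|`,
and the uniform distribution on the rows has base-`|α|` entropy function equal to the
induced rank function `Y ↦ log_{|α|}` (number of distinct rows of `A[Y]`); moreover each
marginal is uniform on the distinct rows of `A[Y]`. -/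
theorem secret_sharing_is_entropic {I E α : Type*}
    [Fintype I] [Fintype E] [Fintype α] [Nonempty I]
    (A : I → E → α) (hinj : Function.Injective A)
    (hss : IsSecretSharingMatrix A) :
    (∃ r : ℕ, Fintype.card I = Fintype.card α ^ r) ∧
    ∀ Y : Finset E,
      shannonEntropy (Fintype.card α) (marg ((PMF.uniformOfFintype I).map A) Y) =
        Real.logb (Fintype.card α)
          ((Finset.univ.image fun i : I => fun y : {e // e ∈ Y} => A i y.1).card) ∧
      ∀ b : {e // e ∈ Y} → α,
        marg ((PMF.uniformOfFintype I).map A) Y b = 0 ∨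
        marg ((PMF.uniformOfFintype I).map A) Y b =
          ((Finset.univ.image fun i : I => fun y : {e // e ∈ Y} => A i y.1).card :
            ENNReal)⁻¹ := by
  constructor
  · -- card I is a power of card α: use Y = ∅
    obtain ⟨m, hm⟩ := fib_card_pow A hinj hss (∅ : Finset E)
    refine ⟨m, ?_⟩
    have i₀ : I := Classical.arbitrary I
    have : fib A (∅ : Finset E) i₀ = Finset.univ := by
      ext j; simp [mem_fib]
    rw [← Finset.card_univ, ← this]
    exact hm i₀
  · intro Y
    obtain ⟨m, hm⟩ := fib_card_pow A hinj hss Y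
    set φ : I → ({e // e ∈ Y} → α) := fun i y => A i y.1 with hφdef
    set T : Finset ({e // e ∈ Y} → α) := Finset.univ.image φ with hTdef
    set c : ℕ := T.card with hcdef
    -- fibers of φ are the fib sets
    have hfibφ : ∀ i : I, (Finset.univ.filter fun j : I => φ j = φ i) = fib A Y i := by
      intro i
      ext j
      simp only [Finset.mem_filter, Finset.mem_univ, true_and, mem_fib]
      constructor
      · intro h y hy
        exact congrFun h ⟨y, hy⟩
      · intro h
        funext y
        exact h y.1 y.2
    -- partition: card I = c * q^m
    have hpart : Fintype.card I = c * Fintype.card α ^ m := by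
      have hcount := Finset.card_eq_sum_card_fiberwise
        (s := (Finset.univ : Finset I)) (t := T) (f := φ)
        (fun x _ => Finset.mem_image_of_mem _ (Finset.mem_univ x))
      rw [Finset.card_univ] at hcount
      rw [hcount]
      have : ∀ b ∈ T, (Finset.univ.filter fun j : I => φ j = b).card
          = Fintype.card α ^ m := by
        intro b hb
        obtain ⟨i, _, rfl⟩ := Finset.mem_image.mp hb
        rw [hfibφ i]; exact hm i
      rw [Finset.sum_congr rfl this, Finset.sum_const, smul_eq_mul]
    -- the marginal PMF
    have hmarg : marg ((PMF.uniformOfFintype I).map A) Y = (PMF.uniformOfFintype I).map φ := by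
      unfold marg
      rw [PMF.map_comp]
      rfl
    have hcardI : (0 : ℕ) < Fintype.card I := Fintype.card_pos
    have hc0 : c ≠ 0 := by
      intro h
      rw [h, zero_mul] at hpart
      omega
    have hq0 : Fintype.card α ^ m ≠ 0 := by
      intro h
      rw [h, mul_zero] at hpart
      omega
    -- value of the marginal
    have hval : ∀ b : {e // e ∈ Y} → α,
        marg ((PMF.uniformOfFintype I).map A) Y b =
          ((Finset.univ.filter fun i : I => b = φ i).card : ENNReal) *
            (Fintype.card I : ENNReal)⁻¹ := by
      intro b
      rw [hmarg, PMF.map_apply]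
      rw [tsum_fintype]
      simp only [PMF.uniformOfFintype_apply]
      rw [← Finset.sum_filter, Finset.sum_const, nsmul_eq_mul]
    have hvalT : ∀ b : {e // e ∈ Y} → α, b ∈ T →
        marg ((PMF.uniformOfFintype I).map A) Y b = (c : ENNReal)⁻¹ := by
      intro b hb
      obtain ⟨i, _, rfl⟩ := Finset.mem_image.mp hb
      rw [hval]
      have : (Finset.univ.filter fun j : I => φ i = φ j) =
          (Finset.univ.filter fun j : I => φ j = φ i) := by
        ext j; simp [eq_comm]
      rw [this, hfibφ i, hm i, hpart]
      push_cast
      rw [ENNReal.mul_inv (by exact Or.inl (Nat.cast_ne_zero.mpr hc0)) (by simp)]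
      rw [← mul_assoc, mul_comm ((Fintype.card α : ENNReal) ^ m), mul_assoc]
      rw [ENNReal.mul_inv_cancel (by exact_mod_cast hq0) (by simp), mul_one]
    have hvalnT : ∀ b : {e // e ∈ Y} → α, b ∉ T →
        marg ((PMF.uniformOfFintype I).map A) Y b = 0 := by
      intro b hb
      rw [hval]
      have : (Finset.univ.filter fun i : I => b = φ i) = ∅ := by
        rw [Finset.filter_eq_empty_iff]
        intro i _ h
        exact hb (h ▸ Finset.mem_image_of_mem _ (Finset.mem_univ i))
      rw [this]
      simp
    refine ⟨?_, fun b => ?_⟩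
    · -- entropy computation
      unfold shannonEntropy
      have hsum : ∑ x : {e // e ∈ Y} → α,
          ((marg ((PMF.uniformOfFintype I).map A) Y) x).toReal *
            Real.logb (Fintype.card α) ((marg ((PMF.uniformOfFintype I).map A) Y) x).toReal
          = ∑ x ∈ T, ((c : ℝ))⁻¹ * Real.logb (Fintype.card α) ((c : ℝ))⁻¹ := by
        rw [← Finset.sum_subset (Finset.subset_univ T)]
        · apply Finset.sum_congr rfl
          intro x hx
          rw [hvalT x hx]
          rw [ENNReal.toReal_inv]
          simp
        · intro x _ hx
          rw [hvalnT x hx]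
          simp
      rw [hsum, Finset.sum_const, ← hcdef, nsmul_eq_mul]
      have hcR : (c : ℝ) ≠ 0 := Nat.cast_ne_zero.mpr hc0
      rw [Real.logb_inv]
      field_simp
    · by_cases hb : b ∈ T
      · exact Or.inr (hvalT b hb)
      · exact Or.inl (hvalnT b hb)
end
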